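/- arXiv:2307.09585 — 8 statements merged into one kernel-verified Lean document; each statement's English description precedes it below -/
import Mathlib

section
/- Let W be a convex body in the plane ℝ² and let p ∈ ℝ². If for every unit vector u, the orthogonal projection of p onto the line u^⊥ is the midpoint of the orthogonal projection of W onto u^⊥, then W is centrally symmetric with centre p. -/
open Metric Set Filter

/-- Rotation by π about the line through `a` with (unit) direction `u`
(in the plane, this is the reflection across that line). -/
noncomputable def lineRefl {d : ℕ} (a u x : EuclideanSpace ℝ (Fin d)) :
    EuclideanSpace ℝ (Fin d) :=
  (2:ℝ) • a - x + ((2:ℝ) * (inner ℝ (x - a) u : ℝ)) • u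

/-- A convex body: compact, convex, nonempty interior. -/
def IsConvexBody {d : ℕ} (K : Set (EuclideanSpace ℝ (Fin d))) : Prop :=
  IsCompact K ∧ Convex ℝ K ∧ (interior K).Nonempty

/-- Central symmetry with centre `o`. -/
def CentSym {d : ℕ} (K : Set (EuclideanSpace ℝ (Fin d)))
    (o : EuclideanSpace ℝ (Fin d)) : Prop :=
  ∀ x, x ∈ K ↔ (2:ℝ) • o - x ∈ K

/-- The line through `a` with direction `u` is an axis of symmetry of `K`. -/
def IsAxisOfSym {d : ℕ} (K : Set (EuclideanSpace ℝ (Fin d)))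
    (a u : EuclideanSpace ℝ (Fin d)) : Prop :=
  lineRefl a u '' K = K

/-- `K` is a body of revolution with axis the line through `a` with direction `u`:
every isometry fixing the axis pointwise maps `K` onto itself. -/
def IsRevBody {d : ℕ} (K : Set (EuclideanSpace ℝ (Fin d)))
    (a u : EuclideanSpace ℝ (Fin d)) : Prop :=
  ∀ f : EuclideanSpace ℝ (Fin d) ≃ᵢ EuclideanSpace ℝ (Fin d),
    (∀ t : ℝ, f (a + t • u) = a + t • u) → f '' K = K

/-- Orthogonal projection onto the hyperplane `u^⊥` (for `u` a unit vector). -/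
noncomputable def projHyp {d : ℕ} (u x : EuclideanSpace ℝ (Fin d)) :
    EuclideanSpace ℝ (Fin d) :=
  x - (inner ℝ x u : ℝ) • u

/-!
If `2p - x ∉ W` for some `x ∈ W`, separate `2p - x` from `W` by a linear functional `f`.
In the plane `ker f` is a line, spanned by a unit vector `u`, and `f` is unchanged by the
projection onto `u^⊥`. The midpoint condition gives `w ∈ W` with the same projection as
`2p - x`, hence `f w = f (2p - x)`, contradicting the separation.
-/

open Module

lemma exists_norm_eq_one_map_eq_zero {E : Type*} [NormedAddCommGroup E] [NormedSpace ℝ E]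
    [FiniteDimensional ℝ E] (hE : 1 < finrank ℝ E) (f : E →L[ℝ] ℝ) :
    ∃ u : E, ‖u‖ = 1 ∧ f u = 0 := by
  have hker : LinearMap.ker (f : E →ₗ[ℝ] ℝ) ≠ ⊥ :=
    LinearMap.ker_ne_bot_of_finrank_lt (by rwa [finrank_self])
  obtain ⟨v, hv, hv0⟩ := Submodule.exists_mem_ne_zero_of_ne_bot hker
  refine ⟨‖v‖⁻¹ • v, norm_smul_inv_norm hv0, ?_⟩
  rw [map_smul, show f v = 0 from hv, smul_zero]

section projHyp

variable {d : ℕ}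

lemma projHyp_sub (u x y : EuclideanSpace ℝ (Fin d)) :
    projHyp u (x - y) = projHyp u x - projHyp u y := by
  simp only [projHyp, inner_sub_left, sub_smul]
  abel

lemma projHyp_smul (u x : EuclideanSpace ℝ (Fin d)) (a : ℝ) :
    projHyp u (a • x) = a • projHyp u x := by
  simp only [projHyp, inner_smul_left, RCLike.conj_to_real, smul_sub, mul_smul]

lemma map_projHyp_of_map_eq_zero {f : EuclideanSpace ℝ (Fin d) →L[ℝ] ℝ}
    {u : EuclideanSpace ℝ (Fin d)} (hu : f u = 0) (x : EuclideanSpace ℝ (Fin d)) :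
    f (projHyp u x) = f x := by
  simp [projHyp, hu]

lemma mem_of_forall_projHyp_mem (hd : 2 ≤ d) {K : Set (EuclideanSpace ℝ (Fin d))}
    (hconv : Convex ℝ K) (hclosed : IsClosed K) {y : EuclideanSpace ℝ (Fin d)}
    (hy : ∀ u : EuclideanSpace ℝ (Fin d), ‖u‖ = 1 → projHyp u y ∈ projHyp u '' K) :
    y ∈ K := by
  by_contra hyK
  obtain ⟨f, c, hfK, hfy⟩ := geometric_hahn_banach_closed_point hconv hclosed hyK
  obtain ⟨u, hu, hfu⟩ :=
    exists_norm_eq_one_map_eq_zero (by rw [finrank_euclideanSpace_fin]; omega) f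
  obtain ⟨w, hwK, hwy⟩ := hy u hu
  have hfw : f w = f y := by
    rw [← map_projHyp_of_map_eq_zero hfu w, hwy, map_projHyp_of_map_eq_zero hfu]
  linarith [hfK w hwK]

lemma centSym_of_forall_mem {K : Set (EuclideanSpace ℝ (Fin d))}
    {o : EuclideanSpace ℝ (Fin d)} (h : ∀ x ∈ K, (2:ℝ) • o - x ∈ K) : CentSym K o := by
  refine fun x ↦ ⟨h x, fun hx ↦ ?_⟩
  simpa using h _ hx

end projHyp

/-- If for every unit vector `u` the projection of `p` onto `u^⊥`
is the midpoint of the projection of the planar convex body `W` onto `u^⊥`,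
then `W` is centrally symmetric with centre `p`. -/
theorem stmt_0 (W : Set (EuclideanSpace ℝ (Fin 2))) (p : EuclideanSpace ℝ (Fin 2))
    (hW : IsConvexBody W)
    (hmid : ∀ u : EuclideanSpace ℝ (Fin 2), ‖u‖ = 1 →
      ∀ x ∈ W, (2:ℝ) • projHyp u p - projHyp u x ∈ projHyp u '' W) :
    CentSym W p := by
  obtain ⟨hcompact, hconv, -⟩ := hW
  refine centSym_of_forall_mem fun x hx ↦
    mem_of_forall_projHyp_mem le_rfl hconv hcompact.isClosed fun u hu ↦ ?_
  rw [projHyp_sub, projHyp_smul]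
  exact hmid u hu x hx
end

section
/- Let {K_i} be a sequence of planar convex bodies converging in the Hausdorff metric to a convex body K, such that each K_i has two lines of symmetry meeting at angle θ_i with θ_i → 0. Then K is a Euclidean disc. -/
open Metric Set Filter

section AuxC
open Complex

noncomputable def reflC (c u x : ℂ) : ℂ := c + u ^ 2 * (starRingEnd ℂ) (x - c)

noncomputable def rotC (α : ℝ) (c x : ℂ) : ℂ := c + Complex.exp (α * I) * (x - c)

lemma reflC_eq (c u x : ℂ) (hu : ‖u‖ = 1) :
    (2:ℝ) • c - x + ((2:ℝ) * (inner ℝ (x - c) u : ℝ)) • u = reflC c u x := by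
  have h1 : (inner ℝ (x - c) u : ℝ) = ((starRingEnd ℂ) (x - c) * u).re := by
    rw [real_inner_eq_re_inner ℂ, mul_comm]; rfl
  have h2 : u * (starRingEnd ℂ) u = 1 := by
    rw [Complex.mul_conj, Complex.normSq_eq_norm_sq, hu]; norm_num
  have hre := Complex.add_conj ((starRingEnd ℂ) (x - c) * u)
  simp only [map_mul, Complex.conj_conj] at hre
  rw [reflC, h1, Complex.real_smul, Complex.real_smul, Complex.ofReal_mul]
  push_cast at hre ⊢
  linear_combination (x - c) * h2 - u * hre

lemma reflC_reflC (c u v x : ℂ) :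
    reflC c u (reflC c v x) = c + (u * (starRingEnd ℂ) v) ^ 2 * (x - c) := by
  simp [reflC, map_mul]
  ring

lemma rotC_rotC (α β : ℝ) (c x : ℂ) : rotC α c (rotC β c x) = rotC (α + β) c x := by
  simp only [rotC, Complex.ofReal_add, add_mul, Complex.exp_add]
  ring

lemma rotC_zero (c x : ℂ) : rotC 0 c x = x := by simp [rotC]

lemma rotC_isometry (α : ℝ) (c : ℂ) (x y : ℂ) : dist (rotC α c x) (rotC α c y) = dist x y := by
  simp only [rotC, Complex.dist_eq]
  rw [show c + cexp (↑α * I) * (x - c) - (c + cexp (↑α * I) * (y - c)) = cexp (↑α * I) * (x - y) by ring]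
  rw [norm_mul, Complex.norm_exp_ofReal_mul_I, one_mul]

lemma sq_eq_exp (u v : ℂ) (θ : ℝ) (hu : ‖u‖ = 1) (hv : ‖v‖ = 1)
    (hθ1 : 0 < θ) (hθ2 : θ ≤ Real.pi / 2)
    (hangle : |(inner ℝ u v : ℝ)| = Real.cos θ) :
    (u * (starRingEnd ℂ) v) ^ 2 = Complex.exp ((2*θ : ℝ) * I)
    ∨ (u * (starRingEnd ℂ) v) ^ 2 = Complex.exp ((-(2*θ) : ℝ) * I) := by
  set w := u * (starRingEnd ℂ) v with hw
  have hwn : ‖w‖ = 1 := by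
    rw [hw, norm_mul, Complex.norm_conj, hu, hv]
    norm_num
  have hnormSq : w.re^2 + w.im^2 = 1 := by
    have := Complex.normSq_apply w
    rw [← Complex.sq_norm, hwn] at this
    nlinarith [this]
  have hre : |w.re| = Real.cos θ := by
    have h1 : (inner ℝ u v : ℝ) = ((starRingEnd ℂ) u * v).re := by
      rw [real_inner_eq_re_inner ℂ, mul_comm]; rfl
    have h2 : (starRingEnd ℂ) u * v = (starRingEnd ℂ) w := by
      rw [hw, map_mul, Complex.conj_conj]
    rw [h1, h2, Complex.conj_re] at hangle
    exact hangle
  have hcos : Real.cos θ ≥ 0 := Real.cos_nonneg_of_mem_Icc ⟨by linarith [Real.pi_pos], hθ2⟩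
  have hsin : Real.sin θ ≥ 0 := Real.sin_nonneg_of_nonneg_of_le_pi (le_of_lt hθ1) (by linarith [Real.pi_pos, hθ2])
  have hre2 : w.re^2 = Real.cos θ ^ 2 := by
    rw [← _root_.sq_abs w.re, hre]
  have him2 : w.im^2 = Real.sin θ ^ 2 := by
    have := Real.sin_sq_add_cos_sq θ
    nlinarith
  have him : |w.im| = Real.sin θ := by
    rw [← Real.sqrt_sq hsin, ← him2, Real.sqrt_sq_eq_abs]
  have hwsq_re : (w^2).re = Real.cos (2*θ) := by
    rw [sq, Complex.mul_re, Real.cos_two_mul']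
    nlinarith [hre2, him2]
  have hwsq_im : |(w^2).im| = Real.sin (2*θ) := by
    rw [sq, Complex.mul_im, Real.sin_two_mul]
    rw [show w.re * w.im + w.im * w.re = 2 * (w.re * w.im) by ring, abs_mul, abs_mul, hre, him]
    norm_num
    ring
  rcases abs_cases (w^2).im with ⟨h, _⟩ | ⟨h, _⟩
  · left
    apply Complex.ext
    · rw [Complex.exp_ofReal_mul_I_re, hwsq_re]
    · rw [Complex.exp_ofReal_mul_I_im, ← h, hwsq_im]
  · right
    apply Complex.ext
    · rw [Complex.exp_ofReal_mul_I_re, hwsq_re, Real.cos_neg]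
    · rw [Complex.exp_ofReal_mul_I_im, Real.sin_neg, ← hwsq_im, h, neg_neg]

lemma rot_mem_of_image (S : Set ℂ) (c : ℂ) (β : ℝ)
    (hS : (fun x => rotC β c x) '' S = S) :
    ∀ k : ℤ, ∀ x ∈ S, rotC (k * β) c x ∈ S := by
  have fwd : ∀ x ∈ S, rotC β c x ∈ S := by
    intro x hx
    rw [← hS]; exact mem_image_of_mem _ hx
  have bwd : ∀ x ∈ S, rotC (-β) c x ∈ S := by
    intro x hx
    rw [← hS] at hx
    obtain ⟨y, hy, rfl⟩ := hx
    have : rotC (-β) c (rotC β c y) = y := by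
      rw [rotC_rotC, neg_add_cancel, rotC_zero]
    rw [this]; exact hy
  intro k
  induction k using Int.induction_on with
  | zero => intro x hx; simpa [rotC_zero] using hx
  | succ n ih =>
      intro x hx
      have h1 : ((n : ℤ) + 1 : ℤ) * β = β + (n : ℤ) * β := by push_cast; ring
      rw [show (((n : ℤ) + 1 : ℤ) : ℝ) * β = β + ((n : ℤ) : ℝ) * β by push_cast; ring,
        ← rotC_rotC]
      exact fwd _ (ih x hx)
  | pred n ih =>
      intro x hx
      rw [show ((-(n : ℤ) - 1 : ℤ) : ℝ) * β = -β + ((-(n:ℤ) : ℤ) : ℝ) * β by push_cast; ring,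
        ← rotC_rotC]
      exact bwd _ (ih x hx)

lemma rot_of_two_refl (S : Set ℂ) (c u v : ℂ) (θ : ℝ)
    (hu : ‖u‖ = 1) (hv : ‖v‖ = 1) (hθ1 : 0 < θ) (hθ2 : θ ≤ Real.pi / 2)
    (hangle : |(inner ℝ u v : ℝ)| = Real.cos θ)
    (h1 : reflC c u '' S = S) (h2 : reflC c v '' S = S) :
    ∀ k : ℤ, ∀ x ∈ S, rotC (k * (2 * θ)) c x ∈ S := by
  have hcomp : (reflC c u ∘ reflC c v) '' S = S := by
    rw [Set.image_comp, h2, h1]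
  have heq : (reflC c u ∘ reflC c v) = fun x => c + (u * (starRingEnd ℂ) v)^2 * (x - c) :=
    funext (reflC_reflC c u v)
  rw [heq] at hcomp
  rcases sq_eq_exp u v θ hu hv hθ1 hθ2 hangle with h | h
  · have : (fun x => rotC (2*θ) c x) '' S = S := by
      rw [show (fun x => rotC (2*θ) c x) = fun x => c + (u * (starRingEnd ℂ) v)^2 * (x - c) by
        funext x; rw [rotC, h]]
      exact hcomp
    exact rot_mem_of_image S c (2*θ) this
  · have hmem := rot_mem_of_image S c (-(2*θ)) (by
      rw [show (fun x => rotC (-(2*θ)) c x) = fun x => c + (u * (starRingEnd ℂ) v)^2 * (x - c) by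
        funext x; rw [rotC, h]]
      exact hcomp)
    intro k x hx
    have := hmem (-k) x hx
    rwa [show ((-k : ℤ) : ℝ) * (-(2*θ)) = (k : ℝ) * (2*θ) by push_cast; ring] at this

lemma disc_of_rot_inv (B : Set ℂ) (hBc : IsCompact B) (hBconv : Convex ℝ B)
    (hBint : (interior B).Nonempty) (z : ℂ)
    (hrot : ∀ α : ℝ, ∀ x ∈ B, rotC α z x ∈ B) :
    ∃ r : ℝ, 0 < r ∧ B = Metric.closedBall z r := by
  have hBne : B.Nonempty := hBint.mono interior_subset
  obtain ⟨x0, hx0B, hx0max⟩ := hBc.exists_isMaxOn hBne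
    (continuous_id.dist continuous_const).continuousOn
  set r := dist x0 z with hr
  have hrmax : ∀ x ∈ B, dist x z ≤ r := fun x hx => hx0max hx
  obtain ⟨w0, hw0⟩ := hBint
  obtain ⟨s, hs, hball⟩ := Metric.isOpen_iff.1 isOpen_interior w0 hw0
  have hrpos : 0 < r := by
    have hp1 : w0 + ((s/2 : ℝ) : ℂ) ∈ B := by
      apply interior_subset
      apply hball
      rw [Metric.mem_ball, Complex.dist_eq,
        show w0 + ((s/2:ℝ):ℂ) - w0 = ((s/2:ℝ):ℂ) by ring,
        Complex.norm_real, Real.norm_eq_abs, abs_of_pos (by linarith)]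
      linarith
    have hp2 : w0 - ((s/2 : ℝ) : ℂ) ∈ B := by
      apply interior_subset
      apply hball
      rw [Metric.mem_ball, Complex.dist_eq,
        show w0 - ((s/2:ℝ):ℂ) - w0 = -((s/2:ℝ):ℂ) by ring,
        norm_neg, Complex.norm_real, Real.norm_eq_abs, abs_of_pos (by linarith)]
      linarith
    have h1 := hrmax _ hp1
    have h2 := hrmax _ hp2
    have htri := dist_triangle (w0 + ((s/2 : ℝ):ℂ)) z (w0 - ((s/2 : ℝ):ℂ))
    rw [dist_comm z] at htri
    have hds : dist (w0 + ((s/2 : ℝ) : ℂ)) (w0 - ((s/2 : ℝ) : ℂ)) = s := by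
      rw [Complex.dist_eq, show w0 + ((s/2:ℝ):ℂ) - (w0 - ((s/2:ℝ):ℂ)) = ((s:ℝ):ℂ) by push_cast; ring,
        Complex.norm_real, Real.norm_eq_abs, abs_of_pos hs]
    linarith
  have hx0z : x0 - z ≠ 0 := by
    intro h
    rw [hr, Complex.dist_eq, h, norm_zero] at hrpos
    exact lt_irrefl 0 hrpos
  have hcircle : ∀ w : ℂ, ‖w‖ = r → z + w ∈ B := by
    intro w hw
    set ζ := w / (x0 - z) with hζ
    have hζabs : ‖ζ‖ = 1 := by
      rw [hζ, norm_div, hw, hr, Complex.dist_eq]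
      exact div_self (fun h => hx0z (norm_eq_zero.1 h))
    have hexp : Complex.exp ((ζ.arg : ℝ) * I) = ζ := by
      have := Complex.norm_mul_exp_arg_mul_I ζ
      rwa [hζabs, Complex.ofReal_one, one_mul] at this
    have := hrot ζ.arg x0 hx0B
    rw [rotC, hexp, hζ, div_mul_cancel₀ _ hx0z] at this
    exact this
  refine ⟨r, hrpos, Set.Subset.antisymm ?_ ?_⟩
  · intro x hx
    rw [Metric.mem_closedBall]
    exact hrmax x hx
  · intro p hp
    rw [Metric.mem_closedBall, Complex.dist_eq] at hp
    set w := p - z with hwdef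
    set m := ‖w‖ with hm
    have hmr : m ≤ r := hp
    have hmnn : 0 ≤ m := norm_nonneg w
    set q : ℝ := Real.sqrt (r^2 - m^2) with hq
    have hq2 : q^2 = r^2 - m^2 := Real.sq_sqrt (by nlinarith)
    by_cases hw0 : w = 0
    · have h1 : z + (r : ℂ) ∈ B := hcircle _ (by
        rw [Complex.norm_real, Real.norm_eq_abs, abs_of_pos hrpos])
      have h2 : z + (-(r : ℂ)) ∈ B := hcircle _ (by
        rw [norm_neg, Complex.norm_real, Real.norm_eq_abs, abs_of_pos hrpos])
      have hmem := hBconv h1 h2 (by norm_num : (0:ℝ) ≤ 1/2) (by norm_num : (0:ℝ) ≤ 1/2) (by norm_num)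
      have hpz : p = z := sub_eq_zero.1 hw0
      have hps : p = (1/2 : ℝ) • (z + (r:ℂ)) + (1/2 : ℝ) • (z + (-(r:ℂ))) := by
        rw [Complex.real_smul, Complex.real_smul, hpz]
        push_cast; ring
      rw [← hps] at hmem
      exact hmem
    · set d := w / m with hd
      have hmne0 : m ≠ 0 := fun h => hw0 (norm_eq_zero.1 (by rw [← hm, h]))
      have hmne : (m : ℂ) ≠ 0 := by
        simp only [ne_eq, Complex.ofReal_eq_zero]; exact hmne0
      have hdabs : ‖d‖ = 1 := by
        rw [hd, norm_div, Complex.norm_real, Real.norm_eq_abs, _root_.abs_of_nonneg hmnn, ← hm, div_self hmne0]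
      have habs1 : ‖w + (q:ℂ) * (d * I)‖ = r := by
        rw [show w + (q:ℂ)*(d*I) = d * ((m:ℂ) + (q:ℂ)*I) by
          rw [hd]; field_simp]
        rw [norm_mul, hdabs, one_mul, Complex.norm_add_mul_I,
          show m^2 + q^2 = r^2 by rw [hq2]; ring]
        exact Real.sqrt_sq (le_of_lt hrpos)
      have habs2 : ‖w - (q:ℂ) * (d * I)‖ = r := by
        rw [show w - (q:ℂ)*(d*I) = d * ((m:ℂ) + ((-q : ℝ):ℂ)*I) by
          rw [hd]; push_cast; field_simp; ring]
        rw [norm_mul, hdabs, one_mul, Complex.norm_add_mul_I,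
          show m^2 + (-q)^2 = r^2 by rw [show (-q)^2 = q^2 by ring, hq2]; ring]
        exact Real.sqrt_sq (le_of_lt hrpos)
      have h1 := hcircle _ habs1
      have h2 := hcircle _ habs2
      have hmem := hBconv h1 h2 (by norm_num : (0:ℝ) ≤ 1/2) (by norm_num : (0:ℝ) ≤ 1/2) (by norm_num)
      have hps : p = (1/2 : ℝ) • (z + (w + (q:ℂ)*(d*I))) + (1/2 : ℝ) • (z + (w - (q:ℂ)*(d*I))) := by
        rw [Complex.real_smul, Complex.real_smul,
          show p = z + w by rw [hwdef]; ring]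
        push_cast; ring
      rw [← hps] at hmem
      exact hmem

lemma rotC_tendsto (α : ℝ) (x z : ℂ) (γ : ℕ → ℝ) (cs : ℕ → ℂ)
    (hγ : Tendsto γ atTop (nhds α)) (hc : Tendsto cs atTop (nhds z)) :
    Tendsto (fun j => rotC (γ j) (cs j) x) atTop (nhds (rotC α z x)) := by
  unfold rotC
  have hexp : Tendsto (fun j => Complex.exp ((γ j : ℂ) * I)) atTop (nhds (Complex.exp ((α:ℂ) * I))) := by
    apply (Complex.continuous_exp.tendsto _).comp
    exact ((Complex.continuous_ofReal.tendsto _).comp hγ).mul_const I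
  exact hc.add (hexp.mul (tendsto_const_nhds.sub hc))

lemma one_sub_exp_lower (β : ℝ) (hβ1 : Real.pi / 2 ≤ β) (hβ2 : β ≤ Real.pi + Real.pi / 2) :
    1 ≤ ‖1 - Complex.exp ((β : ℝ) * I)‖ := by
  have hcos : Real.cos β ≤ 0 := Real.cos_nonpos_of_pi_div_two_le_of_le hβ1 hβ2
  have hre : (Complex.exp ((β:ℝ) * I)).re = Real.cos β := Complex.exp_ofReal_mul_I_re β
  have him : (Complex.exp ((β:ℝ) * I)).im = Real.sin β := Complex.exp_ofReal_mul_I_im β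
  have hsq : ‖1 - Complex.exp ((β:ℝ) * I)‖ ^ 2 = 2 - 2 * Real.cos β := by
    rw [Complex.sq_norm, Complex.normSq_apply]
    simp only [Complex.sub_re, Complex.sub_im, Complex.one_re, Complex.one_im, hre, him]
    have := Real.sin_sq_add_cos_sq β
    nlinarith
  nlinarith [norm_nonneg (1 - Complex.exp ((β:ℝ) * I))]

lemma round_approx (t : ℝ) (θ : ℝ) (hθ : 0 < θ) :
    |((round (t / (2*θ)) : ℤ) : ℝ) * (2*θ) - t| ≤ θ := by
  have h2θ : 0 < 2 * θ := by linarith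
  have h0 := abs_sub_round (t / (2 * θ))
  calc |((round (t / (2*θ)) : ℤ) : ℝ) * (2*θ) - t|
      = |((round (t / (2*θ)) : ℤ) : ℝ) - t/(2*θ)| * (2*θ) := by
        rw [show ((round (t / (2*θ)) : ℤ) : ℝ) * (2*θ) - t
            = (((round (t / (2*θ)) : ℤ) : ℝ) - t/(2*θ)) * (2*θ) by field_simp,
          abs_mul, abs_of_pos h2θ]
    _ ≤ (1/2) * (2*θ) := by
        apply mul_le_mul_of_nonneg_right _ (le_of_lt h2θ)
        rw [abs_sub_comm]
        exact h0
    _ = θ := by ring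


end AuxC

open Complex in
/-- if planar convex bodies `K i` converge (Hausdorff distance) to a
convex body `K`, and each `K i` has two lines of symmetry meeting at an angle
`θ i ≠ 0` with `θ i → 0`, then `K` is a Euclidean disc. -/
theorem stmt_3 (Ki : ℕ → Set (EuclideanSpace ℝ (Fin 2)))
    (K : Set (EuclideanSpace ℝ (Fin 2)))
    (hKi : ∀ i, IsConvexBody (Ki i)) (hK : IsConvexBody K)
    (hconv : Tendsto (fun i => Metric.hausdorffDist (Ki i) K) atTop (nhds 0))
    (c u v : ℕ → EuclideanSpace ℝ (Fin 2)) (θ : ℕ → ℝ)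
    (hu : ∀ i, ‖u i‖ = 1) (hv : ∀ i, ‖v i‖ = 1)
    (hsym₁ : ∀ i, lineRefl (c i) (u i) '' Ki i = Ki i)
    (hsym₂ : ∀ i, lineRefl (c i) (v i) '' Ki i = Ki i)
    (hθpos : ∀ i, 0 < θ i) (hθle : ∀ i, θ i ≤ Real.pi / 2)
    (hangle : ∀ i, |(inner ℝ (u i) (v i) : ℝ)| = Real.cos (θ i))
    (hθ0 : Tendsto θ atTop (nhds 0)) :
    ∃ (z : EuclideanSpace ℝ (Fin 2)) (r : ℝ), 0 < r ∧ K = Metric.closedBall z r := by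
  classical
  set e : ℂ ≃ₗᵢ[ℝ] EuclideanSpace ℝ (Fin 2) :=
    Complex.isometryOfOrthonormal (EuclideanSpace.basisFun (Fin 2) ℝ) with he
  set B : Set ℂ := ⇑e ⁻¹' K with hB
  set A : ℕ → Set ℂ := fun i => ⇑e ⁻¹' (Ki i) with hA
  have hpre : ∀ S : Set (EuclideanSpace ℝ (Fin 2)), ⇑e ⁻¹' S = ⇑e.symm '' S := by
    intro S; ext x; constructor
    · intro hx; exact ⟨e x, hx, e.symm_apply_apply x⟩
    · rintro ⟨y, hy, rfl⟩; simpa [e.apply_symm_apply] using hy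
  have himg : ∀ S : Set (EuclideanSpace ℝ (Fin 2)), ⇑e '' (⇑e ⁻¹' S) = S :=
    fun S => Set.image_preimage_eq S e.surjective
  have hBco : IsCompact B := by rw [hB, hpre]; exact hK.1.image e.symm.continuous
  have hBconv : Convex ℝ B := hK.2.1.is_linear_preimage ⟨e.map_add, e.map_smul⟩
  have hBint : (interior B).Nonempty := by
    obtain ⟨x, hx⟩ := hK.2.2
    refine ⟨e.symm x, ?_⟩
    have hco : ⇑e.toHomeomorph = ⇑e := e.coe_toHomeomorph
    rw [hB, ← hco, ← e.toHomeomorph.preimage_interior]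
    rw [Set.mem_preimage, hco, e.apply_symm_apply]
    exact hx
  have hBne : B.Nonempty := hBint.mono interior_subset
  have hAco : ∀ i, IsCompact (A i) := fun i => by
    rw [hA]; simp only; rw [hpre]; exact (hKi i).1.image e.symm.continuous
  have hAne : ∀ i, (A i).Nonempty := fun i => by
    obtain ⟨x, hx⟩ := (hKi i).2.2
    refine ⟨e.symm x, ?_⟩
    simp only [hA, Set.mem_preimage, e.apply_symm_apply]
    exact interior_subset hx
  set c' : ℕ → ℂ := fun i => e.symm (c i) with hc'
  set u' : ℕ → ℂ := fun i => e.symm (u i) with hu'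
  set v' : ℕ → ℂ := fun i => e.symm (v i) with hv'
  -- transport of reflections
  have hrefl : ∀ (a uu : EuclideanSpace ℝ (Fin 2)), ‖uu‖ = 1 →
      ∀ S : Set (EuclideanSpace ℝ (Fin 2)), lineRefl a uu '' S = S →
      reflC (e.symm a) (e.symm uu) '' (⇑e ⁻¹' S) = ⇑e ⁻¹' S := by
    intro a uu huu S hS
    have hnu : ‖e.symm uu‖ = 1 := by rw [e.symm.norm_map]; exact huu
    have hfun : ∀ y : ℂ, reflC (e.symm a) (e.symm uu) y = e.symm (lineRefl a uu (e y)) := by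
      intro y
      have hinner : (inner ℝ (e y - a) uu : ℝ) = (inner ℝ (y - e.symm a) (e.symm uu) : ℝ) := by
        rw [← e.inner_map_map (y - e.symm a) (e.symm uu)]
        rw [map_sub, e.apply_symm_apply, e.apply_symm_apply]
      rw [← reflC_eq _ _ _ hnu]
      unfold lineRefl
      rw [map_add, map_sub, map_smul, map_smul, e.symm_apply_apply, hinner]
    calc reflC (e.symm a) (e.symm uu) '' (⇑e ⁻¹' S)
        = (fun y => e.symm (lineRefl a uu (e y))) '' (⇑e ⁻¹' S) := Set.image_congr' hfun
      _ = ⇑e.symm '' (lineRefl a uu '' (⇑e '' (⇑e ⁻¹' S))) := by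
          rw [Set.image_image, Set.image_image]
      _ = ⇑e ⁻¹' S := by rw [himg, hS, ← hpre]
  have hrotA : ∀ i, ∀ k : ℤ, ∀ x ∈ A i, rotC (k * (2 * θ i)) (c' i) x ∈ A i := by
    intro i
    apply rot_of_two_refl (A i) (c' i) (u' i) (v' i) (θ i)
      (by rw [hu', e.symm.norm_map]; exact hu i)
      (by rw [hv', e.symm.norm_map]; exact hv i)
      (hθpos i) (hθle i)
      (by rw [← hangle i]; congr 1
          rw [hu', hv', ← e.inner_map_map (e.symm (u i)) (e.symm (v i)),
            e.apply_symm_apply, e.apply_symm_apply])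
      (hrefl (c i) (u i) (hu i) (Ki i) (hsym₁ i))
      (hrefl (c i) (v i) (hv i) (Ki i) (hsym₂ i))
  -- Hausdorff distance facts
  set ε : ℕ → ℝ := fun i => Metric.hausdorffDist (Ki i) K with hεdef
  have hεA : ∀ i, Metric.hausdorffDist (A i) B = ε i := by
    intro i
    rw [hA, hB]; simp only
    rw [hpre, hpre, Metric.hausdorffDist_image e.symm.isometry]
  have hfin : ∀ i, EMetric.hausdorffEdist (A i) B ≠ ⊤ := fun i =>
    Metric.hausdorffEdist_ne_top_of_nonempty_of_bounded (hAne i) hBne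
      (hAco i).isBounded hBco.isBounded
  have hεnn : ∀ i, 0 ≤ ε i := fun i => Metric.hausdorffDist_nonneg
  have hnear : ∀ i, ∀ x ∈ B, ∃ y ∈ A i, dist x y < ε i + θ i := by
    intro i x hx
    have h1 : Metric.hausdorffDist B (A i) < ε i + θ i := by
      rw [Metric.hausdorffDist_comm, hεA]; linarith [hθpos i]
    exact Metric.exists_dist_lt_of_hausdorffDist_lt hx h1
      (by rw [EMetric.hausdorffEdist_comm]; exact hfin i)
  have hnear' : ∀ i, ∀ y ∈ A i, ∃ x' ∈ B, dist y x' < ε i + θ i := by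
    intro i y hy
    have h1 : Metric.hausdorffDist (A i) B < ε i + θ i := by
      rw [hεA]; linarith [hθpos i]
    exact Metric.exists_dist_lt_of_hausdorffDist_lt hy h1 (hfin i)
  -- bounding the centres
  obtain ⟨R, hR⟩ := hBco.isBounded.subset_closedBall 0
  obtain ⟨x0, hx0⟩ := hBne
  have hx0R : ‖x0‖ ≤ R := by
    have := hR hx0
    rw [Metric.mem_closedBall, Complex.dist_eq, sub_zero] at this
    exact this
  have hRnn : 0 ≤ R := le_trans (norm_nonneg x0) hx0R
  have hev : ∀ᶠ i in atTop, θ i < 2⁻¹ ∧ ε i < 1 :=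
    (hθ0.eventually_lt_const (by norm_num)).and (hconv.eventually_lt_const one_pos)
  obtain ⟨N, hN⟩ := eventually_atTop.1 hev
  have habsbd : ∀ i β, ∀ y ∈ A i, dist x0 y < 2 →
      ‖rotC β (c' i) y‖ ≤ R + ε i + θ i → True := fun _ _ _ _ _ _ => trivial
  have hcbound : ∀ i, N ≤ i → ‖c' i‖ ≤ 2*R + 4 := by
    intro i hi
    obtain ⟨hθi, hεi⟩ := hN i hi
    set k : ℤ := round (Real.pi / (2 * θ i)) with hkdef
    set β : ℝ := (k : ℝ) * (2 * θ i) with hβdef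
    have hk : |β - Real.pi| ≤ θ i := round_approx Real.pi (θ i) (hθpos i)
    have hβ1 : Real.pi / 2 ≤ β := by
      rcases abs_le.1 hk with ⟨h1, _⟩
      have := Real.pi_gt_three
      linarith
    have hβ2 : β ≤ Real.pi + Real.pi / 2 := by
      rcases abs_le.1 hk with ⟨_, h2⟩
      have := Real.pi_gt_three
      linarith
    obtain ⟨y, hyA, hxy⟩ := hnear i x0 hx0
    have hdxy : dist x0 y < 2 := by linarith
    have hgy : rotC β (c' i) y ∈ A i := hrotA i k y hyA
    obtain ⟨w, hwB, hgyw⟩ := hnear' i _ hgy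
    have hwR : ‖w‖ ≤ R := by
      have := hR hwB
      rw [Metric.mem_closedBall, Complex.dist_eq, sub_zero] at this
      exact this
    have habs0 : ∀ ζ : ℂ, ‖ζ‖ = dist ζ 0 := fun ζ => by
      rw [Complex.dist_eq, sub_zero]
    have h1 : ‖rotC β (c' i) y‖ ≤ R + 2 :=
      calc ‖rotC β (c' i) y‖ = dist (rotC β (c' i) y) 0 := habs0 _
        _ ≤ dist (rotC β (c' i) y) w + dist w 0 := dist_triangle _ _ _
        _ ≤ (ε i + θ i) + R := by
            rw [← habs0 w]
            exact add_le_add (le_of_lt hgyw) hwR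
        _ ≤ R + 2 := by linarith
    have h2 : ‖rotC β (c' i) x0‖ ≤ R + 4 :=
      calc ‖rotC β (c' i) x0‖ = dist (rotC β (c' i) x0) 0 := habs0 _
        _ ≤ dist (rotC β (c' i) x0) (rotC β (c' i) y) + dist (rotC β (c' i) y) 0 :=
            dist_triangle _ _ _
        _ = dist x0 y + ‖rotC β (c' i) y‖ := by
            rw [rotC_isometry, ← habs0]
        _ ≤ 2 + (R + 2) := add_le_add (le_of_lt hdxy) h1
        _ = R + 4 := by ring
    have hE : ‖Complex.exp ((β:ℝ) * I)‖ = 1 := Complex.norm_exp_ofReal_mul_I β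
    have h1E := one_sub_exp_lower β hβ1 hβ2
    have key : (c' i) * (1 - Complex.exp ((β:ℝ) * I))
        = rotC β (c' i) x0 - Complex.exp ((β:ℝ) * I) * x0 := by
      rw [rotC]; ring
    have h3 : ‖c' i‖ ≤ ‖(c' i) * (1 - Complex.exp ((β:ℝ) * I))‖ := by
      rw [norm_mul]
      nlinarith [norm_nonneg (c' i)]
    have h4 : ‖(c' i) * (1 - Complex.exp ((β:ℝ) * I))‖ ≤ 2*R + 4 := by
      rw [key]
      calc ‖rotC β (c' i) x0 - Complex.exp ((β:ℝ) * I) * x0‖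
          ≤ ‖rotC β (c' i) x0‖ + ‖Complex.exp ((β:ℝ) * I) * x0‖ := by
            have := norm_add_le (rotC β (c' i) x0) (-(Complex.exp ((β:ℝ) * I) * x0))
            rwa [← sub_eq_add_neg, norm_neg] at this
        _ ≤ (R + 4) + 1 * R := by
            rw [norm_mul, hE]
            exact add_le_add h2 (by simpa using hx0R)
        _ = 2*R + 4 := by ring
    linarith
  -- convergent subsequence of centres
  have hc2 : ∀ j : ℕ, c' (N + j) ∈ Metric.closedBall (0:ℂ) (2*R + 4) := by
    intro j
    rw [Metric.mem_closedBall, Complex.dist_eq, sub_zero]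
    exact hcbound (N + j) (Nat.le_add_right N j)
  obtain ⟨z, _, φ, hφ, hφten⟩ :=
    (isCompact_closedBall (0:ℂ) (2*R + 4)).tendsto_subseq hc2
  set ψ : ℕ → ℕ := fun j => N + φ j with hψdef
  have hψtop : Tendsto ψ atTop atTop :=
    tendsto_atTop_mono (fun j => le_trans hφ.le_apply (Nat.le_add_left _ _)) tendsto_id
  have hθψ : Tendsto (fun j => θ (ψ j)) atTop (nhds 0) := hθ0.comp hψtop
  have hεψ : Tendsto (fun j => ε (ψ j)) atTop (nhds 0) := hconv.comp hψtop
  have hcψ : Tendsto (fun j => c' (ψ j)) atTop (nhds z) := hφten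
  -- rotation invariance of B
  have hrotB : ∀ α : ℝ, ∀ x ∈ B, rotC α z x ∈ B := by
    intro α x hx
    set γ : ℕ → ℝ := fun j => ((round (α / (2 * θ (ψ j))) : ℤ) : ℝ) * (2 * θ (ψ j)) with hγdef
    have hγbd : ∀ j, |γ j - α| ≤ θ (ψ j) := fun j => round_approx α (θ (ψ j)) (hθpos (ψ j))
    have hγ : Tendsto γ atTop (nhds α) := by
      have h0 : Tendsto (fun j => γ j - α) atTop (nhds 0) :=
        squeeze_zero_norm (fun j => hγbd j) hθψ
      have := h0.add (tendsto_const_nhds (x := α) (f := atTop))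
      simpa using this
    choose y hyA hxy using fun j => hnear (ψ j) x hx
    have hgy : ∀ j, rotC (γ j) (c' (ψ j)) (y j) ∈ A (ψ j) := fun j =>
      hrotA (ψ j) (round (α / (2 * θ (ψ j)))) (y j) (hyA j)
    choose w hwB hgyw using fun j => hnear' (ψ j) _ (hgy j)
    have hDj : Tendsto (fun j => dist (rotC α z x) (rotC (γ j) (c' (ψ j)) x)) atTop (nhds 0) := by
      have h1 := rotC_tendsto α x z γ (fun j => c' (ψ j)) hγ hcψ
      have h2 := Filter.Tendsto.dist (tendsto_const_nhds (x := rotC α z x) (f := atTop)) h1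
      simpa using h2
    have hbound : ∀ j, Metric.infDist (rotC α z x) B
        ≤ dist (rotC α z x) (rotC (γ j) (c' (ψ j)) x) + 2 * (ε (ψ j) + θ (ψ j)) := by
      intro j
      have t1 := dist_triangle (rotC α z x) (rotC (γ j) (c' (ψ j)) x) (w j)
      have t2 := dist_triangle (rotC (γ j) (c' (ψ j)) x) (rotC (γ j) (c' (ψ j)) (y j)) (w j)
      have t3 : dist (rotC (γ j) (c' (ψ j)) x) (rotC (γ j) (c' (ψ j)) (y j)) = dist x (y j) :=
        rotC_isometry _ _ _ _
      have t4 := Metric.infDist_le_dist_of_mem (x := rotC α z x) (hwB j)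
      have t5 := hxy j
      have t6 := hgyw j
      rw [t3] at t2
      linarith
    have hlim : Tendsto (fun j => dist (rotC α z x) (rotC (γ j) (c' (ψ j)) x)
        + 2 * (ε (ψ j) + θ (ψ j))) atTop (nhds 0) := by
      have := hDj.add ((hεψ.add hθψ).const_mul 2)
      simpa using this
    have hinf : Metric.infDist (rotC α z x) B ≤ 0 :=
      ge_of_tendsto hlim (Filter.Eventually.of_forall hbound)
    exact (hBco.isClosed.mem_iff_infDist_zero (hBint.mono interior_subset)).2
      (le_antisymm hinf Metric.infDist_nonneg)
  obtain ⟨r, hrpos, hBr⟩ := disc_of_rot_inv B hBco hBconv hBint z hrotB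
  refine ⟨e z, r, hrpos, ?_⟩
  have hKB : K = ⇑e '' B := by rw [hB, himg]
  rw [hKB, hBr]
  have hco2 : ⇑e.toIsometryEquiv = ⇑e := rfl
  have h5 := e.toIsometryEquiv.image_closedBall z r
  rw [hco2] at h5
  exact h5
end

section
/- Let L₁ and L₂ be two axes of symmetry of a convex body K ⊂ ℝ³ with L₁ ∩ L₂ ≠ ∅. If the angle between L₁ and L₂ is an irrational multiple of π, then the set of lines obtained by iteratively reflecting L₁ and L₂ in each other (T₁ = L₁, T₂ = L₂, T_k = R_{T_{k−1}}(T_{k−2})) is dense in the pencil of all lines through L₁ ∩ L₂ in the plane spanned by L₁ and L₂, and every line in this pencil is an axis of symmetry of K. -/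
open Metric Set Filter

/-- The line through `a` with direction `u`, as a set of points. -/
def lineSet {d : ℕ} (a u : EuclideanSpace ℝ (Fin d)) : Set (EuclideanSpace ℝ (Fin d)) :=
  {x | ∃ t : ℝ, x = a + t • u}

/-!
The directions of the iterated axes are the points `cos (kθ) u + sin (kθ) e` of the unit circle
of the plane `span {u, v}`, where `(u, e)` is an orthonormal basis of that plane: the recurrence
`T_k = R_{T_{k-1}}(T_{k-2})` is the addition formula `cos (x + 2θ) = 2 cos θ cos (x + θ) - cos x`.
As `θ / π` is irrational, the natural multiples of `θ` are dense in `ℝ / 2πℤ`, so these directions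
are dense in the circle. Conjugating the half-turn about one axis by the half-turn about another
gives the half-turn about the reflected axis, so every `T_k` is an axis of symmetry; since `K` is
closed and the half-turn depends continuously on its direction, every limit of axes is an axis.
-/

open Real
open scoped RealInnerProductSpace

theorem denseRange_nsmul_coe_angle {θ : ℝ} (hθ : ∀ q : ℚ, θ ≠ q * π) :
    DenseRange (fun n : ℕ => n • (θ : Real.Angle)) := by
  have : Fact (0 < 2 * π) := ⟨by positivity⟩
  -- `Real.Angle` is a type synonym of `AddCircle (2 * π)`, so its compactness is not found
  have : CompactSpace Real.Angle := inferInstanceAs (CompactSpace (AddCircle (2 * π)))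
  rw [← denseRange_zsmul_iff_nsmul]
  refine AddCircle.denseRange_zsmul_coe_iff.2 fun ⟨q, hq⟩ => hθ (2 * q) ?_
  rw [eq_div_iff (by positivity)] at hq
  push_cast; linarith

theorem exists_angle_cos_sin {p q : ℝ} (h : p ^ 2 + q ^ 2 = 1) :
    ∃ ψ : Real.Angle, ψ.cos = p ∧ ψ.sin = q := by
  have hz : ‖(⟨p, q⟩ : ℂ)‖ = 1 := by
    rw [Complex.norm_def, Real.sqrt_eq_one, Complex.normSq_apply]
    linear_combination h
  obtain ⟨t, ht⟩ := (Complex.norm_eq_one_iff _).1 hz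
  refine ⟨t, ?_, ?_⟩
  · rw [Real.Angle.cos_coe, ← Complex.exp_ofReal_mul_I_re, ht]
  · rw [Real.Angle.sin_coe, ← Complex.exp_ofReal_mul_I_im, ht]

section CirclePoint

variable {E : Type*} [NormedAddCommGroup E] [InnerProductSpace ℝ E]

noncomputable def circlePoint (e₁ e₂ : E) (ψ : Real.Angle) : E := ψ.cos • e₁ + ψ.sin • e₂

variable {e₁ e₂ : E}

theorem continuous_circlePoint (e₁ e₂ : E) : Continuous (circlePoint e₁ e₂) :=
  (Real.Angle.continuous_cos.smul continuous_const).add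
    (Real.Angle.continuous_sin.smul continuous_const)

theorem circlePoint_zero : circlePoint e₁ e₂ 0 = e₁ := by simp [circlePoint]

theorem circlePoint_mem_span (ψ : Real.Angle) :
    circlePoint e₁ e₂ ψ ∈ Submodule.span ℝ {e₁, e₂} :=
  Submodule.mem_span_pair.2 ⟨_, _, rfl⟩

theorem circlePoint_add_add (ψ θ : Real.Angle) :
    circlePoint e₁ e₂ (ψ + θ + θ) =
      (2 * θ.cos) • circlePoint e₁ e₂ (ψ + θ) - circlePoint e₁ e₂ ψ := by
  simp only [circlePoint, Real.Angle.cos_add, Real.Angle.sin_add]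
  match_scalars
  · linear_combination (-ψ.cos) * Real.Angle.cos_sq_add_sin_sq θ
  · linear_combination (-ψ.sin) * Real.Angle.cos_sq_add_sin_sq θ

theorem inner_add_smul_add_smul (h₁ : ‖e₁‖ = 1) (h₂ : ‖e₂‖ = 1) (h₁₂ : ⟪e₁, e₂⟫ = 0)
    (a b c d : ℝ) : ⟪a • e₁ + b • e₂, c • e₁ + d • e₂⟫ = a * c + b * d := by
  have h₂₁ : ⟪e₂, e₁⟫ = 0 := by rw [real_inner_comm, h₁₂]
  simp only [inner_add_left, inner_add_right, real_inner_smul_left, real_inner_smul_right,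
    real_inner_self_eq_norm_sq, h₁, h₂, h₁₂, h₂₁]
  ring

theorem inner_circlePoint (h₁ : ‖e₁‖ = 1) (h₂ : ‖e₂‖ = 1) (h₁₂ : ⟪e₁, e₂⟫ = 0)
    (s t : Real.Angle) : ⟪circlePoint e₁ e₂ s, circlePoint e₁ e₂ t⟫ = (s - t).cos := by
  rw [circlePoint, circlePoint, inner_add_smul_add_smul h₁ h₂ h₁₂, sub_eq_add_neg,
    Real.Angle.cos_add, Real.Angle.cos_neg, Real.Angle.sin_neg]
  ring

theorem norm_circlePoint (h₁ : ‖e₁‖ = 1) (h₂ : ‖e₂‖ = 1) (h₁₂ : ⟪e₁, e₂⟫ = 0)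
    (ψ : Real.Angle) : ‖circlePoint e₁ e₂ ψ‖ = 1 := by
  have h := inner_circlePoint h₁ h₂ h₁₂ ψ ψ
  rwa [sub_self, Real.Angle.cos_zero, real_inner_self_eq_norm_sq,
    pow_eq_one_iff_of_nonneg (norm_nonneg _) two_ne_zero] at h

theorem exists_circlePoint_eq (h₁ : ‖e₁‖ = 1) (h₂ : ‖e₂‖ = 1) (h₁₂ : ⟪e₁, e₂⟫ = 0) {w : E}
    (hw : w ∈ Submodule.span ℝ {e₁, e₂}) (hw₁ : ‖w‖ = 1) : ∃ ψ, circlePoint e₁ e₂ ψ = w := by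
  obtain ⟨p, q, rfl⟩ := Submodule.mem_span_pair.1 hw
  have hpq : p ^ 2 + q ^ 2 = 1 := by
    have h := real_inner_self_eq_norm_sq (p • e₁ + q • e₂)
    rw [inner_add_smul_add_smul h₁ h₂ h₁₂, hw₁] at h
    linear_combination h
  obtain ⟨ψ, hcos, hsin⟩ := exists_angle_cos_sin hpq
  exact ⟨ψ, by rw [circlePoint, hcos, hsin]⟩

theorem eq_circlePoint_nsmul_of_rec (h₁ : ‖e₁‖ = 1) (h₂ : ‖e₂‖ = 1) (h₁₂ : ⟪e₁, e₂⟫ = 0)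
    {θ : Real.Angle} {d : ℕ → E} (h0 : d 0 = e₁) (h1 : d 1 = circlePoint e₁ e₂ θ)
    (hrec : ∀ k, d (k + 2) = (2 * ⟪d k, d (k + 1)⟫) • d (k + 1) - d k) (k : ℕ) :
    d k = circlePoint e₁ e₂ (k • θ) := by
  induction k using Nat.twoStepInduction with
  | zero => rw [h0, zero_nsmul, circlePoint_zero]
  | one => rw [h1, one_nsmul]
  | more n ih ih' =>
    rw [hrec, ih, ih', inner_circlePoint h₁ h₂ h₁₂, succ_nsmul, sub_add_cancel_left,
      Real.Angle.cos_neg, succ_nsmul, succ_nsmul, circlePoint_add_add]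

theorem exists_circlePoint_eq_of_inner_eq_cos {u v : E} {θ : Real.Angle} (hu : ‖u‖ = 1)
    (hv : ‖v‖ = 1) (hcos : θ.cos = ⟪u, v⟫) (hsin : θ.sin ≠ 0) :
    ∃ e, ‖e‖ = 1 ∧ ⟪u, e⟫ = 0 ∧ circlePoint u e θ = v := by
  have huu : ⟪u, u⟫ = 1 := by rw [real_inner_self_eq_norm_sq, hu, one_pow]
  have hvv : ⟪v, v⟫ = 1 := by rw [real_inner_self_eq_norm_sq, hv, one_pow]
  have hvu : ⟪v, u⟫ = θ.cos := by rw [real_inner_comm, hcos]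
  refine ⟨θ.sin⁻¹ • (v - θ.cos • u), ?_, ?_, ?_⟩
  · have h : ⟪θ.sin⁻¹ • (v - θ.cos • u), θ.sin⁻¹ • (v - θ.cos • u)⟫ = 1 := by
      simp only [real_inner_smul_left, real_inner_smul_right, inner_sub_left, inner_sub_right,
        huu, hvv, hvu, ← hcos]
      field_simp
      linear_combination -Real.Angle.cos_sq_add_sin_sq θ
    rwa [real_inner_self_eq_norm_sq, pow_eq_one_iff_of_nonneg (norm_nonneg _) two_ne_zero] at h
  · simp only [real_inner_smul_right, inner_sub_right, huu, ← hcos]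
    ring
  · rw [circlePoint, smul_inv_smul₀ hsin]
    abel

end CirclePoint

section Axes

variable {d : ℕ} {K : Set (EuclideanSpace ℝ (Fin d))} {a u v w : EuclideanSpace ℝ (Fin d)}

theorem lineRefl_lineRefl (hu : ‖u‖ = 1) (x : EuclideanSpace ℝ (Fin d)) :
    lineRefl a u (lineRefl a u x) = x := by
  have huu : ⟪u, u⟫ = 1 := by rw [real_inner_self_eq_norm_sq, hu, one_pow]
  simp only [lineRefl, inner_add_left, inner_sub_left, real_inner_smul_left, huu]
  module

theorem lineRefl_conj (hv : ‖v‖ = 1) (x : EuclideanSpace ℝ (Fin d)) :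
    lineRefl a v (lineRefl a u (lineRefl a v x)) = lineRefl a ((2 * ⟪u, v⟫) • v - u) x := by
  have hvv : ⟪v, v⟫ = 1 := by rw [real_inner_self_eq_norm_sq, hv, one_pow]
  simp only [lineRefl, inner_sub_left, inner_add_left, real_inner_smul_left,
    real_inner_smul_right, inner_sub_right, hvv, real_inner_comm u v]
  match_scalars <;> ring

theorem continuous_lineRefl_dir (a x : EuclideanSpace ℝ (Fin d)) :
    Continuous fun u => lineRefl a u x := by
  unfold lineRefl
  fun_prop

theorem IsAxisOfSym.reflect (hu : IsAxisOfSym K a u) (hv : IsAxisOfSym K a v) (hv₁ : ‖v‖ = 1) :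
    IsAxisOfSym K a ((2 * ⟪u, v⟫) • v - u) := by
  have h : lineRefl a ((2 * ⟪u, v⟫) • v - u) = lineRefl a v ∘ lineRefl a u ∘ lineRefl a v :=
    funext fun x => (lineRefl_conj hv₁ x).symm
  rw [IsAxisOfSym, h, Set.image_comp, Set.image_comp, hv, hu, hv]

theorem isAxisOfSym_of_rec {dir : ℕ → EuclideanSpace ℝ (Fin d)}
    (h0 : IsAxisOfSym K a (dir 0)) (h1 : IsAxisOfSym K a (dir 1)) (hnorm : ∀ k, ‖dir k‖ = 1)
    (hrec : ∀ k, dir (k + 2) = (2 * ⟪dir k, dir (k + 1)⟫) • dir (k + 1) - dir k) (k : ℕ) :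
    IsAxisOfSym K a (dir k) := by
  induction k using Nat.twoStepInduction with
  | zero => exact h0
  | one => exact h1
  | more n ih ih' => rw [hrec]; exact ih.reflect ih' (hnorm _)

theorem isAxisOfSym_of_mem_closure {S : Set (EuclideanSpace ℝ (Fin d))} (hK : IsClosed K)
    (hS : ∀ w' ∈ S, IsAxisOfSym K a w') (hw : w ∈ closure S) (hw₁ : ‖w‖ = 1) :
    IsAxisOfSym K a w := by
  have hsub : lineRefl a w '' K ⊆ K := by
    rintro _ ⟨x, hx, rfl⟩
    refine hK.closure_subset <|
      map_mem_closure (f := fun u => lineRefl a u x) (continuous_lineRefl_dir a x) hw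
        fun w' hw' => ?_
    rw [← hS w' hw']
    exact Set.mem_image_of_mem _ hx
  exact hsub.antisymm fun x hx => ⟨lineRefl a w x, hsub ⟨x, hx, rfl⟩, lineRefl_lineRefl hw₁ x⟩

end Axes

/-- if two axes of symmetry of a convex body `K ⊂ ℝ³` meet at a
point `a` at an angle which is an irrational multiple of `π`, then the iterated
family of axes `T₁ = L₁`, `T₂ = L₂`, `T_k = R_{T_{k-1}}(T_{k-2})` (described via
its directions `dvec`) is dense in the pencil of lines through `a` in the plane
spanned by the two directions, and every line of that pencil is an axis of
symmetry of `K`. -/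
theorem stmt_5 (K : Set (EuclideanSpace ℝ (Fin 3))) (hK : IsConvexBody K)
    (a u v : EuclideanSpace ℝ (Fin 3)) (hu : ‖u‖ = 1) (hv : ‖v‖ = 1)
    (hax₁ : IsAxisOfSym K a u) (hax₂ : IsAxisOfSym K a v)
    (θ : ℝ) (hθ : 0 < θ) (hθπ : θ < Real.pi)
    (hcos : Real.cos θ = (inner ℝ u v : ℝ))
    (hirr : ∀ q : ℚ, θ ≠ (q : ℝ) * Real.pi)
    (dvec : ℕ → EuclideanSpace ℝ (Fin 3))
    (hd0 : dvec 0 = u) (hd1 : dvec 1 = v)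
    (hdrec : ∀ k, dvec (k + 2) =
      ((2:ℝ) * (inner ℝ (dvec k) (dvec (k + 1)) : ℝ)) • dvec (k + 1) - dvec k) :
    (∀ w : EuclideanSpace ℝ (Fin 3), ‖w‖ = 1 → w ∈ Submodule.span ℝ {u, v} →
        w ∈ closure {w' | ∃ k, w' = dvec k ∨ w' = -dvec k}) ∧
    (∀ w : EuclideanSpace ℝ (Fin 3), ‖w‖ = 1 → w ∈ Submodule.span ℝ {u, v} →
        IsAxisOfSym K a w) := by
  have hsin : Real.Angle.sin θ ≠ 0 := by
    rw [Real.Angle.sin_coe]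
    exact (sin_pos_of_pos_of_lt_pi hθ hθπ).ne'
  obtain ⟨e, he, hue, hv_eq⟩ :=
    exists_circlePoint_eq_of_inner_eq_cos hu hv (by rwa [Real.Angle.cos_coe]) hsin
  have hdvec : ∀ k, dvec k = circlePoint u e (k • (θ : Real.Angle)) :=
    eq_circlePoint_nsmul_of_rec hu he hue hd0 (hd1.trans hv_eq.symm) hdrec
  have hspan : Submodule.span ℝ {u, v} ≤ Submodule.span ℝ {u, e} := by
    rw [Submodule.span_le, Set.insert_subset_iff, Set.singleton_subset_iff, ← hv_eq]
    exact ⟨Submodule.subset_span (Set.mem_insert _ _), circlePoint_mem_span _⟩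
  have hdense : ∀ w, ‖w‖ = 1 → w ∈ Submodule.span ℝ {u, v} → w ∈ closure (Set.range dvec) := by
    intro w hw hw_span
    obtain ⟨ψ, rfl⟩ := exists_circlePoint_eq hu he hue (hspan hw_span) hw
    have h := (continuous_circlePoint u e).range_subset_closure_image_dense
      (denseRange_nsmul_coe_angle hirr) ⟨ψ, rfl⟩
    rwa [← Set.range_comp, Function.comp_def, ← funext hdvec] at h
  have hnorm : ∀ k, ‖dvec k‖ = 1 := fun k => hdvec k ▸ norm_circlePoint hu he hue _
  have haxes : ∀ k, IsAxisOfSym K a (dvec k) :=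
    isAxisOfSym_of_rec (hd0 ▸ hax₁) (hd1 ▸ hax₂) hnorm hdrec
  refine ⟨fun w hw hw_span => closure_mono ?_ (hdense w hw hw_span), fun w hw hw_span =>
    isAxisOfSym_of_mem_closure hK.1.isClosed (Set.forall_mem_range.2 haxes)
      (hdense w hw hw_span) hw⟩
  rintro _ ⟨k, rfl⟩
  exact ⟨k, Or.inl rfl⟩
end

section
/- Let K ⊂ ℝ³ be a convex body, H a plane, and p ∈ H a point. If every line contained in H passing through p is an axis of symmetry of K, then H is a plane of symmetry of K and K is a centrally symmetric body of revolution whose axis is the line through p orthogonal to H. -/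
open Metric Set Filter

/-- Reflection across the plane through `p` with unit normal `n`. -/
noncomputable def planeRefl {d : ℕ} (p n x : EuclideanSpace ℝ (Fin d)) :
    EuclideanSpace ℝ (Fin d) :=
  x - ((2:ℝ) * (inner ℝ (x - p) n : ℝ)) • n

local notation "⟪" x ", " y "⟫" => @inner ℝ _ _ x y

/-- In `ℝ³` there is a unit vector orthogonal to any two given vectors. -/
lemma aux_exists_unit_orth (v w : EuclideanSpace ℝ (Fin 3)) :
    ∃ u : EuclideanSpace ℝ (Fin 3), ‖u‖ = 1 ∧ ⟪u, v⟫ = 0 ∧ ⟪u, w⟫ = 0 := by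
  classical
  set S : Submodule ℝ (EuclideanSpace ℝ (Fin 3)) := Submodule.span ℝ {v, w} with hS
  have hcard : ({v, w} : Set (EuclideanSpace ℝ (Fin 3))).toFinset.card ≤ 2 := by
    simp only [Set.toFinset_insert, Set.toFinset_singleton]
    exact (Finset.card_insert_le _ _).trans (by simp)
  have hle : Module.finrank ℝ S ≤ 2 :=
    (finrank_span_le_card ({v, w} : Set (EuclideanSpace ℝ (Fin 3)))).trans hcard
  have htot : Module.finrank ℝ S + Module.finrank ℝ Sᗮ = 3 := by
    simpa using S.finrank_add_finrank_orthogonal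
  have hpos : 0 < Module.finrank ℝ Sᗮ := by omega
  have hne : Sᗮ ≠ ⊥ := by
    intro h
    rw [h] at hpos
    simp at hpos
  obtain ⟨z, hz, hz0⟩ := Submodule.exists_mem_ne_zero_of_ne_bot hne
  refine ⟨‖z‖⁻¹ • z, ?_, ?_, ?_⟩
  · rw [norm_smul]
    simp [norm_ne_zero_iff.2 hz0]
  · rw [real_inner_smul_left]
    have h : ⟪v, z⟫ = 0 := (Submodule.mem_orthogonal S z).1 hz v
      (Submodule.subset_span (by simp))
    rw [real_inner_comm] at h
    rw [h]; ring
  · rw [real_inner_smul_left]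
    have h : ⟪w, z⟫ = 0 := (Submodule.mem_orthogonal S z).1 hz w
      (Submodule.subset_span (by simp))
    rw [real_inner_comm] at h
    rw [h]; ring

/-- 2D reflection lemma: two vectors of equal norm orthogonal to `n` are
related by a reflection across a line direction `u` orthogonal to `n`. -/
lemma aux_refl2d (n a b : EuclideanSpace ℝ (Fin 3)) (han : ⟪a, n⟫ = 0)
    (hbn : ⟪b, n⟫ = 0) (hab : ‖a‖ = ‖b‖) :
    ∃ u : EuclideanSpace ℝ (Fin 3), ‖u‖ = 1 ∧ ⟪u, n⟫ = 0 ∧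
      ((2:ℝ) * ⟪a, u⟫) • u - a = b := by
  by_cases h : a + b = 0
  · by_cases ha : a = 0
    · obtain ⟨u, hu1, hu2, -⟩ := aux_exists_unit_orth n n
      refine ⟨u, hu1, hu2, ?_⟩
      have hb : b = 0 := by
        have h' := h; rw [ha, zero_add] at h'; exact h'
      simp [ha, hb]
    · obtain ⟨u, hu1, hu2, hu3⟩ := aux_exists_unit_orth n a
      refine ⟨u, hu1, hu2, ?_⟩
      have hau : ⟪a, u⟫ = 0 := by rw [real_inner_comm]; exact hu3
      have hb : b = -a := by
        have h' := h; rw [add_comm] at h'; exact eq_neg_of_add_eq_zero_left h'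
      rw [hau, hb]; module
  · set s : ℝ := ‖a + b‖ with hs
    have hs0 : s ≠ 0 := by
      rw [hs]; exact norm_ne_zero_iff.2 h
    refine ⟨s⁻¹ • (a + b), ?_, ?_, ?_⟩
    · have hsnn : (0:ℝ) ≤ s := hs ▸ norm_nonneg _
      rw [norm_smul, Real.norm_eq_abs, abs_inv, abs_of_nonneg hsnn, ← hs,
        inv_mul_cancel₀ hs0]
    · rw [real_inner_smul_left, inner_add_left, han, hbn]; ring
    · have key : 2 * ⟪a, a + b⟫ = s * s := by
        rw [hs, ← real_inner_self_eq_norm_mul_norm]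
        rw [inner_add_left, inner_add_right, inner_add_right,
          real_inner_self_eq_norm_mul_norm, real_inner_self_eq_norm_mul_norm,
          hab, real_inner_comm b a]
        ring
      rw [real_inner_smul_right, smul_smul]
      have hcoeff : 2 * (s⁻¹ * ⟪a, a + b⟫) * s⁻¹ = 1 := by
        calc 2 * (s⁻¹ * ⟪a, a + b⟫) * s⁻¹
            = (2 * ⟪a, a + b⟫) * (s⁻¹ * s⁻¹) := by ring
          _ = (s * s) * (s⁻¹ * s⁻¹) := by rw [key]
          _ = (s * s⁻¹) * (s * s⁻¹) := by ring
          _ = 1 := by rw [mul_inv_cancel₀ hs0]; norm_num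
      rw [hcoeff, one_smul]
      abel

/-- One application of an axis of symmetry: flips the height, sets the
radial part to anything of the right norm. -/
lemma aux_step (K : Set (EuclideanSpace ℝ (Fin 3))) (p n : EuclideanSpace ℝ (Fin 3))
    (hn : ‖n‖ = 1)
    (haxes : ∀ w : EuclideanSpace ℝ (Fin 3), ‖w‖ = 1 → (inner ℝ w n : ℝ) = 0 →
      IsAxisOfSym K p w)
    {x : EuclideanSpace ℝ (Fin 3)} (hx : x ∈ K) (b : EuclideanSpace ℝ (Fin 3))
    (hbn : ⟪b, n⟫ = 0)
    (hbnorm : ‖b‖ = ‖x - p - (⟪x - p, n⟫ : ℝ) • n‖) :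
    p - (⟪x - p, n⟫ : ℝ) • n + b ∈ K := by
  set t : ℝ := ⟪x - p, n⟫ with ht
  set a : EuclideanSpace ℝ (Fin 3) := x - p - t • n with ha
  have hnn : ⟪n, n⟫ = (1:ℝ) := by
    rw [real_inner_self_eq_norm_sq, hn]; norm_num
  have han : ⟪a, n⟫ = 0 := by
    rw [ha, show (⟪x - p - t • n, n⟫ : ℝ) = ⟪x - p, n⟫ - ⟪t • n, n⟫ from
      inner_sub_left _ _ _, real_inner_smul_left, hnn, ← ht]
    ring
  obtain ⟨u, hu1, hu2, hu3⟩ := aux_refl2d n a b han hbn hbnorm.symm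
  have himg := haxes u hu1 hu2
  have hz : lineRefl p u x ∈ K := himg ▸ Set.mem_image_of_mem _ hx
  have hxu : (⟪x - p, u⟫ : ℝ) = ⟪a, u⟫ := by
    have hxpa : x - p = t • n + a := by rw [ha]; abel
    have hnu : (⟪n, u⟫ : ℝ) = 0 := by rw [real_inner_comm]; exact hu2
    rw [hxpa, inner_add_left, real_inner_smul_left, hnu]
    ring
  have hform : lineRefl p u x = p - t • n + b := by
    unfold lineRefl
    rw [hxu]
    have hcu : ((2:ℝ) * ⟪a, u⟫) • u = b + a := by
      rw [← hu3]; abel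
    rw [hcu]
    have hxeq : x = p + t • n + a := by rw [ha]; abel
    rw [hxeq]
    module
  rw [hform] at hz
  exact hz

/-- Membership in `K` only depends on the height (up to sign) and radius. -/
lemma aux_mem (K : Set (EuclideanSpace ℝ (Fin 3))) (p n : EuclideanSpace ℝ (Fin 3))
    (hn : ‖n‖ = 1)
    (haxes : ∀ w : EuclideanSpace ℝ (Fin 3), ‖w‖ = 1 → (inner ℝ w n : ℝ) = 0 →
      IsAxisOfSym K p w)
    {x : EuclideanSpace ℝ (Fin 3)} (hx : x ∈ K) (y : EuclideanSpace ℝ (Fin 3))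
    (hy1 : (⟪y - p, n⟫ : ℝ) = ⟪x - p, n⟫ ∨ (⟪y - p, n⟫ : ℝ) = -⟪x - p, n⟫)
    (hy2 : ‖y - p - (⟪y - p, n⟫ : ℝ) • n‖ = ‖x - p - (⟪x - p, n⟫ : ℝ) • n‖) :
    y ∈ K := by
  have hnn : ⟪n, n⟫ = (1:ℝ) := by
    rw [real_inner_self_eq_norm_sq, hn]; norm_num
  set t : ℝ := ⟪x - p, n⟫ with ht
  set s : ℝ := ⟪y - p, n⟫ with hs
  set b : EuclideanSpace ℝ (Fin 3) := y - p - s • n with hb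
  have hbn : ⟪b, n⟫ = 0 := by
    rw [hb, show (⟪y - p - s • n, n⟫ : ℝ) = ⟪y - p, n⟫ - ⟪s • n, n⟫ from
      inner_sub_left _ _ _, real_inner_smul_left, hnn, ← hs]
    ring
  have hyeq : y = p + s • n + b := by rw [hb]; abel
  rcases hy1 with hcase | hcase
  · -- same height: two steps
    have hz := aux_step K p n hn haxes hx b hbn hy2
    set z : EuclideanSpace ℝ (Fin 3) := p - t • n + b with hzdef
    have hzp : z - p = b - t • n := by rw [hzdef]; abel
    have hzn : (⟪z - p, n⟫ : ℝ) = -t := by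
      rw [hzp, inner_sub_left, real_inner_smul_left, hnn, hbn]; ring
    have hzb : z - p - (⟪z - p, n⟫ : ℝ) • n = b := by
      rw [hzn, hzp]; module
    have hz2 := aux_step K p n hn haxes hz b hbn (by rw [hzb])
    rw [hzn] at hz2
    have hyy : p - (-t) • n + b = y := by rw [hyeq, hcase]; module
    rwa [hyy] at hz2
  · -- opposite height: one step
    have hz := aux_step K p n hn haxes hx b hbn hy2
    have hyy : p - t • n + b = y := by rw [hyeq, hcase]; module
    rwa [hyy] at hz

/-- Isometries fixing the axis preserve height and radius. -/
lemma aux_iso (p n : EuclideanSpace ℝ (Fin 3)) (hn : ‖n‖ = 1)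
    (f : EuclideanSpace ℝ (Fin 3) ≃ᵢ EuclideanSpace ℝ (Fin 3))
    (hp : f p = p) (hpn : f (p + n) = p + n) (x : EuclideanSpace ℝ (Fin 3)) :
    (⟪f x - p, n⟫ : ℝ) = ⟪x - p, n⟫ ∧
      ‖f x - p - (⟪f x - p, n⟫ : ℝ) • n‖ = ‖x - p - (⟪x - p, n⟫ : ℝ) • n‖ := by
  have h0 : ‖f x - p‖ = ‖x - p‖ := by
    have h := f.dist_eq x p
    rw [hp, dist_eq_norm, dist_eq_norm] at h
    exact h
  have h1 : ‖f x - p - n‖ = ‖x - p - n‖ := by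
    have h := f.dist_eq x (p + n)
    rw [hpn, dist_eq_norm, dist_eq_norm] at h
    simpa [sub_sub] using h
  have e0 : ‖f x - p‖ ^ 2 = ‖x - p‖ ^ 2 := by rw [h0]
  have e1 : ‖f x - p - n‖ ^ 2 = ‖x - p - n‖ ^ 2 := by rw [h1]
  rw [norm_sub_sq_real (f x - p) n, norm_sub_sq_real (x - p) n] at e1
  have hinner : (⟪f x - p, n⟫ : ℝ) = ⟪x - p, n⟫ := by linarith
  refine ⟨hinner, ?_⟩
  have hr2 : ‖f x - p - (⟪f x - p, n⟫ : ℝ) • n‖ ^ 2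
      = ‖x - p - (⟪x - p, n⟫ : ℝ) • n‖ ^ 2 := by
    rw [norm_sub_sq_real (f x - p) ((⟪f x - p, n⟫ : ℝ) • n),
      norm_sub_sq_real (x - p) ((⟪x - p, n⟫ : ℝ) • n),
      real_inner_smul_right, real_inner_smul_right, norm_smul, norm_smul,
      hn, hinner, e0]
  have h := congrArg Real.sqrt hr2
  rwa [Real.sqrt_sq (norm_nonneg _), Real.sqrt_sq (norm_nonneg _)] at h

theorem stmt_6 (K : Set (EuclideanSpace ℝ (Fin 3))) (hK : IsConvexBody K)
    (p n : EuclideanSpace ℝ (Fin 3)) (hn : ‖n‖ = 1)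
    (haxes : ∀ w : EuclideanSpace ℝ (Fin 3), ‖w‖ = 1 → (inner ℝ w n : ℝ) = 0 →
      IsAxisOfSym K p w) :
    planeRefl p n '' K = K ∧ (∃ c, CentSym K c) ∧ IsRevBody K p n := by
  have hnn : ⟪n, n⟫ = (1:ℝ) := by
    rw [real_inner_self_eq_norm_sq, hn]; norm_num
  have hplane1 : ∀ x : EuclideanSpace ℝ (Fin 3),
      (⟪planeRefl p n x - p, n⟫ : ℝ) = -(⟪x - p, n⟫ : ℝ) := by
    intro x
    have h : planeRefl p n x - p = (x - p) - ((2:ℝ) * (⟪x - p, n⟫ : ℝ)) • n := by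
      unfold planeRefl; abel
    rw [h, inner_sub_left, real_inner_smul_left, hnn]
    ring
  have hplane2 : ∀ x : EuclideanSpace ℝ (Fin 3),
      planeRefl p n x - p - (-(⟪x - p, n⟫ : ℝ)) • n
        = x - p - (⟪x - p, n⟫ : ℝ) • n := by
    intro x; unfold planeRefl; module
  have hplane_mem : ∀ x ∈ K, planeRefl p n x ∈ K := by
    intro x hx
    exact aux_mem K p n hn haxes hx _ (Or.inr (hplane1 x))
      (by rw [hplane1 x]; exact congrArg norm (hplane2 x))
  have hinv : ∀ x, planeRefl p n (planeRefl p n x) = x := by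
    intro x
    show planeRefl p n x - ((2:ℝ) * (⟪planeRefl p n x - p, n⟫ : ℝ)) • n = x
    rw [hplane1 x]
    unfold planeRefl
    module
  have hplane : planeRefl p n '' K = K := by
    apply Set.Subset.antisymm
    · rintro y ⟨x, hx, rfl⟩
      exact hplane_mem x hx
    · intro y hy
      exact ⟨planeRefl p n y, hplane_mem y hy, hinv y⟩
  have hcent1 : ∀ x : EuclideanSpace ℝ (Fin 3),
      (⟪(2:ℝ) • p - x - p, n⟫ : ℝ) = -(⟪x - p, n⟫ : ℝ) := by
    intro x
    rw [show (2:ℝ) • p - x - p = -(x - p) by module, inner_neg_left]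
  have hcent_mem : ∀ x ∈ K, (2:ℝ) • p - x ∈ K := by
    intro x hx
    refine aux_mem K p n hn haxes hx _ (Or.inr (hcent1 x)) ?_
    rw [hcent1 x]
    rw [show (2:ℝ) • p - x - p - (-(⟪x - p, n⟫ : ℝ)) • n
        = -(x - p - (⟪x - p, n⟫ : ℝ) • n) by module, norm_neg]
  have hcent : CentSym K p := by
    intro x
    constructor
    · exact hcent_mem x
    · intro h
      have h2 := hcent_mem _ h
      rwa [show (2:ℝ) • p - ((2:ℝ) • p - x) = x by module] at h2
  have hrev : IsRevBody K p n := by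
    intro f hf
    have hp : f p = p := by simpa using hf 0
    have hpn : f (p + n) = p + n := by simpa using hf 1
    have hps : f.symm p = p := by
      have h := congrArg f.symm hp
      rw [f.symm_apply_apply] at h
      exact h.symm
    have hpns : f.symm (p + n) = p + n := by
      have h := congrArg f.symm hpn
      rw [f.symm_apply_apply] at h
      exact h.symm
    apply Set.Subset.antisymm
    · rintro y ⟨x, hx, rfl⟩
      obtain ⟨h1, h2⟩ := aux_iso p n hn f hp hpn x
      exact aux_mem K p n hn haxes hx _ (Or.inl h1) h2
    · intro y hy
      obtain ⟨h1, h2⟩ := aux_iso p n hn f.symm hps hpns y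
      exact ⟨f.symm y, aux_mem K p n hn haxes hy _ (Or.inl h1) h2,
        f.apply_symm_apply y⟩
  exact ⟨hplane, ⟨p, hcent⟩, hrev⟩
end

section
/- Let K ⊂ ℝⁿ (n ≥ 4) be a body of revolution with axis of revolution contained in the line L, and let Π be a hyperplane with Π ∩ int K ≠ ∅. Then Π ∩ K is an (n−1)-dimensional body of revolution; its axis is Π ∩ Δ, where Δ is any 2-plane containing L and a normal vector of Π. -/
open Metric Set Filter

/-- `S` is a body of revolution inside the hyperplane `P`, with axis the line
through `b` with direction `w` (a line contained in `P`): every ambient isometry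
fixing that line pointwise and mapping `P` onto itself maps `S` onto itself. -/
def IsRevBodyIn {d : ℕ} (P S : Set (EuclideanSpace ℝ (Fin d)))
    (b w : EuclideanSpace ℝ (Fin d)) : Prop :=
  w ≠ 0 ∧ b ∈ P ∧ (∀ t : ℝ, b + t • w ∈ P) ∧
    ∀ f : EuclideanSpace ℝ (Fin d) ≃ᵢ EuclideanSpace ℝ (Fin d),
      (∀ t : ℝ, f (b + t • w) = b + t • w) → f '' P = P → f '' S = S

section Aux
variable {n : ℕ}

noncomputable def reflHyp (ν : EuclideanSpace ℝ (Fin n)) (t : ℝ)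
    (x : EuclideanSpace ℝ (Fin n)) : EuclideanSpace ℝ (Fin n) :=
  x + ((2:ℝ) * (t - (inner ℝ x ν : ℝ))) • ν

lemma reflHyp_inner (ν : EuclideanSpace ℝ (Fin n)) (hν : ‖ν‖ = 1) (t : ℝ)
    (x : EuclideanSpace ℝ (Fin n)) :
    (inner ℝ (reflHyp ν t x) ν : ℝ) = 2 * t - (inner ℝ x ν : ℝ) := by
  rw [show reflHyp ν t x = x + ((2:ℝ) * (t - (inner ℝ x ν : ℝ))) • ν from rfl,
    inner_add_left, real_inner_smul_left, real_inner_self_eq_norm_sq, hν]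
  ring

lemma reflHyp_invol (ν : EuclideanSpace ℝ (Fin n)) (hν : ‖ν‖ = 1) (t : ℝ)
    (x : EuclideanSpace ℝ (Fin n)) : reflHyp ν t (reflHyp ν t x) = x := by
  rw [show reflHyp ν t (reflHyp ν t x)
      = reflHyp ν t x + ((2:ℝ) * (t - (inner ℝ (reflHyp ν t x) ν : ℝ))) • ν from rfl,
    reflHyp_inner ν hν t x, reflHyp]
  module

lemma reflHyp_dist (ν : EuclideanSpace ℝ (Fin n)) (hν : ‖ν‖ = 1) (t : ℝ)
    (x y : EuclideanSpace ℝ (Fin n)) : dist (reflHyp ν t x) (reflHyp ν t y) = dist x y := by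
  rw [dist_eq_norm, dist_eq_norm]
  have hxy : reflHyp ν t x - reflHyp ν t y
      = (x - y) - ((2:ℝ) * (inner ℝ (x - y) ν : ℝ)) • ν := by
    simp only [reflHyp, inner_sub_left]
    module
  rw [hxy]
  set v := x - y
  have h2 : ‖v - ((2:ℝ) * (inner ℝ v ν : ℝ)) • ν‖ ^ 2 = ‖v‖ ^ 2 := by
    rw [@norm_sub_sq_real, real_inner_smul_right, norm_smul, Real.norm_eq_abs, hν,
      mul_one, sq_abs]
    ring
  calc ‖v - ((2:ℝ) * (inner ℝ v ν : ℝ)) • ν‖ = √(‖v - ((2:ℝ) * (inner ℝ v ν : ℝ)) • ν‖ ^ 2) :=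
        (Real.sqrt_sq (norm_nonneg _)).symm
    _ = √(‖v‖ ^ 2) := by rw [h2]
    _ = ‖v‖ := Real.sqrt_sq (norm_nonneg _)

noncomputable def reflIso (ν : EuclideanSpace ℝ (Fin n)) (hν : ‖ν‖ = 1) (t : ℝ) :
    EuclideanSpace ℝ (Fin n) ≃ᵢ EuclideanSpace ℝ (Fin n) :=
  ⟨⟨reflHyp ν t, reflHyp ν t, reflHyp_invol ν hν t, reflHyp_invol ν hν t⟩,
    Isometry.of_dist_eq (reflHyp_dist ν hν t)⟩

end Aux

/-- a hyperplane section (meeting the interior) of a body of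
revolution `K ⊂ ℝⁿ`, `n ≥ 4`, with axis the line `L` through `a` with direction
`u`, is an `(n-1)`-dimensional body of revolution whose axis is `Π ∩ Δ`, where
`Δ = a + span{u, ν}` is the 2-plane containing `L` and the normal `ν` of `Π`. -/
theorem stmt_7 {n : ℕ} (hn : 4 ≤ n)
    (K : Set (EuclideanSpace ℝ (Fin n))) (hK : IsConvexBody K)
    (a u : EuclideanSpace ℝ (Fin n)) (hu : u ≠ 0) (hrev : IsRevBody K a u)
    (ν : EuclideanSpace ℝ (Fin n)) (hν : ‖ν‖ = 1) (t : ℝ)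
    (hind : LinearIndependent ℝ ![u, ν])
    (hmeet : ({x | (inner ℝ x ν : ℝ) = t} ∩ interior K).Nonempty) :
    ∃ b w : EuclideanSpace ℝ (Fin n),
      b - a ∈ Submodule.span ℝ {u, ν} ∧ w ∈ Submodule.span ℝ {u, ν} ∧
      (inner ℝ w ν : ℝ) = 0 ∧
      IsRevBodyIn {x | (inner ℝ x ν : ℝ) = t} ({x | (inner ℝ x ν : ℝ) = t} ∩ K) b w := by
  classical
  set e : ℝ := (inner ℝ u ν : ℝ) with he
  set c₀ : ℝ := t - (inner ℝ a ν : ℝ) with hc₀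
  set b := a + c₀ • ν with hb
  set w := u - e • ν with hw
  have hνν : (inner ℝ ν ν : ℝ) = 1 := by
    rw [real_inner_self_eq_norm_sq, hν]; norm_num
  have hwν : (inner ℝ w ν : ℝ) = 0 := by
    rw [hw, inner_sub_left, real_inner_smul_left, hνν, ← he]; ring
  have hbν : (inner ℝ b ν : ℝ) = t := by
    rw [hb, inner_add_left, real_inner_smul_left, hνν, hc₀]; ring
  have hw0 : w ≠ 0 := by
    intro h0
    have h1 : (1:ℝ) • u + (-e) • ν = 0 := by
      rw [one_smul, neg_smul, ← sub_eq_add_neg, ← hw, h0]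
    exact one_ne_zero ((LinearIndependent.pair_iff.mp hind 1 (-e) h1).1)
  refine ⟨b, w, ?_, ?_, hwν, hw0, hbν, ?_, ?_⟩
  · rw [hb, add_sub_cancel_left]
    exact Submodule.smul_mem _ _ (Submodule.subset_span (by simp))
  · rw [hw]
    exact sub_mem (Submodule.subset_span (by simp))
      (Submodule.smul_mem _ _ (Submodule.subset_span (by simp)))
  · intro s
    show (inner ℝ (b + s • w) ν : ℝ) = t
    rw [inner_add_left, real_inner_smul_left, hbν, hwν]; ring
  · intro f hfL hfP
    have fb : f b = b := by simpa using hfL 0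
    set A := f.toRealLinearIsometryEquiv with hA
    have hfx : ∀ x, f x = b + A (x - b) := by
      intro x
      have h1 : A (x - b) = f x - f b := by
        rw [map_sub]
        simp only [hA, IsometryEquiv.toRealLinearIsometryEquiv_apply]
        abel
      rw [h1, fb]; abel
    have hAw : A w = w := by
      have h := hfL 1
      rw [one_smul] at h
      have h4 := (hfx (b + w)).symm.trans h
      rw [add_sub_cancel_left] at h4
      exact add_left_cancel h4
    have hbwd : ∀ x, (inner ℝ x ν : ℝ) = t → (inner ℝ (f.symm x) ν : ℝ) = t := by
      intro x hx
      have hx' : x ∈ f '' {x | (inner ℝ x ν : ℝ) = t} := by rw [hfP]; exact hx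
      obtain ⟨y, hy, hxy⟩ := hx'
      have h2 : f.symm x = y := by rw [← hxy]; exact f.symm_apply_apply y
      rw [h2]; exact hy
    have hAν : ∀ z : EuclideanSpace ℝ (Fin n),
        (inner ℝ z ν : ℝ) = 0 → (inner ℝ z (A ν) : ℝ) = 0 := by
      intro z hz
      set y := f.symm (b + z) - b with hy
      have hbz : (inner ℝ (b + z) ν : ℝ) = t := by rw [inner_add_left, hbν, hz, add_zero]
      have hyν : (inner ℝ y ν : ℝ) = 0 := by
        rw [hy, inner_sub_left, hbwd _ hbz, hbν]; ring
      have hAy : A y = z := by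
        have h1 : f (b + y) = b + z := by
          rw [hy, add_sub_cancel]
          exact f.apply_symm_apply _
        have h2 := (hfx (b + y)).symm.trans h1
        rw [add_sub_cancel_left] at h2
        exact add_left_cancel h2
      calc (inner ℝ z (A ν) : ℝ) = (inner ℝ (A y) (A ν) : ℝ) := by rw [hAy]
        _ = (inner ℝ y ν : ℝ) := A.inner_map_map y ν
        _ = 0 := hyν
    have hspan : A ν ∈ Submodule.span ℝ {ν} := by
      rw [← Submodule.orthogonal_orthogonal (Submodule.span ℝ {ν}),
        Submodule.mem_orthogonal]
      intro z hz
      have hzν : (inner ℝ z ν : ℝ) = 0 := by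
        rw [real_inner_comm]
        exact (Submodule.mem_orthogonal _ z).mp hz ν (Submodule.mem_span_singleton_self ν)
      exact hAν z hzν
    obtain ⟨c, hc⟩ := Submodule.mem_span_singleton.mp hspan
    have hc1 : c = 1 ∨ c = -1 := by
      have h1 : ‖A ν‖ = 1 := by rw [A.norm_map, hν]
      rw [← hc, norm_smul, Real.norm_eq_abs, hν, mul_one] at h1
      exact (abs_eq (by norm_num : (0:ℝ) ≤ 1)).mp h1
    have hline : ∀ q : ℝ, a + q • u - b = q • w + (q * e - c₀) • ν := by
      intro q
      rw [hb, hw]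
      module
    rcases hc1 with hc1 | hc1
    · -- A ν = ν : f fixes the axis L pointwise
      have hAν1 : A ν = ν := by rw [← hc, hc1, one_smul]
      have hfix : ∀ q : ℝ, f (a + q • u) = a + q • u := by
        intro q
        rw [hfx, hline q, map_add, map_smul, map_smul, hAw, hAν1, hb, hw]
        module
      rw [Set.image_inter f.injective, hfP, hrev f hfix]
    · -- A ν = -ν : compose with the reflection across Π
      have hAν1 : A ν = -ν := by rw [← hc, hc1]; module
      set s := reflIso ν hν t with hs
      have hsfix : ∀ x, (inner ℝ x ν : ℝ) = t → s x = x := by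
        intro x hx
        show reflHyp ν t x = x
        rw [reflHyp, hx]
        simp
      have hrfix : ∀ q : ℝ, (f.trans s) (a + q • u) = a + q • u := by
        intro q
        have hfa : f (a + q • u) = b + (q • w + (q * e - c₀) • (-ν)) := by
          rw [hfx, hline q, map_add, map_smul, map_smul, hAw, hAν1]
        show s (f (a + q • u)) = a + q • u
        rw [hfa]
        show reflHyp ν t _ = _
        have hin : (inner ℝ (b + (q • w + (q * e - c₀) • (-ν))) ν : ℝ)
            = t - (q * e - c₀) := by
          simp only [inner_add_left, real_inner_smul_left, inner_neg_left, hνν, hwν, hbν, hc₀]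
          ring
        rw [reflHyp, hin, hb, hw]
        module
      have h1 : ⇑s '' (⇑f '' K) = K := by
        have h2 := hrev (f.trans s) hrfix
        rwa [show ⇑(f.trans s) = ⇑s ∘ ⇑f from rfl, Set.image_comp] at h2
      have h3 : ⇑f '' K = ⇑s ⁻¹' K := by
        conv_rhs => rw [← h1]
        rw [Set.preimage_image_eq _ s.injective]
      rw [Set.image_inter f.injective, hfP, h3]
      ext x
      simp only [Set.mem_inter_iff, Set.mem_setOf_eq, Set.mem_preimage]
      constructor
      · rintro ⟨hx1, hx2⟩; rw [hsfix x hx1] at hx2; exact ⟨hx1, hx2⟩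
      · rintro ⟨hx1, hx2⟩; rw [hsfix x hx1]; exact ⟨hx1, hx2⟩
end

section
/- Let K ⊂ ℝⁿ (n ≥ 4) be a convex body with a unique diameter D, and suppose there is a point p ∉ aff(D) such that for every hyperplane Π through p, the section Π ∩ K is an (n−1)-dimensional body of revolution. Then K is a body of revolution whose axis is the line containing D. -/
open Metric Set Filter

/-- The segment `[d₁, d₂]` is the unique diameter (chord of maximal length) of `K`. -/
def UniqueDiameter {d : ℕ} (K : Set (EuclideanSpace ℝ (Fin d)))
    (d₁ d₂ : EuclideanSpace ℝ (Fin d)) : Prop :=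
  d₁ ∈ K ∧ d₂ ∈ K ∧ d₁ ≠ d₂ ∧ (∀ x ∈ K, ∀ y ∈ K, dist x y ≤ dist d₁ d₂) ∧
    ∀ x ∈ K, ∀ y ∈ K, dist x y = dist d₁ d₂ → ({x, y} : Set _) = {d₁, d₂}

local notation "⟪" x ", " y "⟫" => @inner ℝ _ _ x y

section Helpers
variable {n : ℕ}

lemma exists_unit_orth (hn : 4 ≤ n) (a b c : EuclideanSpace ℝ (Fin n)) :
    ∃ ν : EuclideanSpace ℝ (Fin n), ‖ν‖ = 1 ∧ ⟪a, ν⟫ = (0:ℝ) ∧ ⟪b, ν⟫ = (0:ℝ) ∧ ⟪c, ν⟫ = (0:ℝ) := by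
  classical
  set T : Submodule ℝ (EuclideanSpace ℝ (Fin n)) := Submodule.span ℝ {a, b, c} with hT
  have hrank : Module.finrank ℝ T ≤ 3 := by
    refine le_trans (finrank_span_le_card ({a, b, c} : Set _)) ?_
    rw [Set.toFinset_insert, Set.toFinset_insert, Set.toFinset_singleton]
    refine le_trans (Finset.card_insert_le _ _) ?_
    have := Finset.card_insert_le b ({c} : Finset _)
    simp at this ⊢
    omega
  have hne : Tᗮ ≠ ⊥ := by
    intro h
    have hTtop : T = ⊤ := Submodule.orthogonal_eq_bot_iff.mp h
    have : Module.finrank ℝ T = n := by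
      rw [hTtop]; simp [finrank_top]
    omega
  obtain ⟨ν', hν'T, hν'0⟩ := Submodule.exists_mem_ne_zero_of_ne_bot hne
  refine ⟨‖ν'‖⁻¹ • ν', ?_, ?_, ?_, ?_⟩
  · simp [norm_smul, norm_ne_zero_iff.mpr hν'0, inv_mul_cancel₀]
  · rw [real_inner_smul_right, hν'T a (Submodule.subset_span (by simp)), mul_zero]
  · rw [real_inner_smul_right, hν'T b (Submodule.subset_span (by simp)), mul_zero]
  · rw [real_inner_smul_right, hν'T c (Submodule.subset_span (by simp)), mul_zero]

end Helpers

section Refl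
variable {V : Type*} [NormedAddCommGroup V] [InnerProductSpace ℝ V]

/-- affine reflection across the hyperplane through `b` with unit normal `m` -/
noncomputable def lref (b m : V) : V → V := fun y => y - (2 * ⟪y - b, m⟫) • m

lemma lref_involutive (b m : V) (hm : ‖m‖ = 1) : Function.Involutive (lref b m) := by
  intro y
  unfold lref
  have hmm : ⟪m, m⟫ = (1:ℝ) := by
    rw [real_inner_self_eq_norm_sq, hm]; norm_num
  have h1 : ⟪y - (2 * ⟪y - b, m⟫) • m - b, m⟫ = -⟪y - b, m⟫ := by
    rw [sub_right_comm, inner_sub_left, real_inner_smul_left, hmm]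
    ring
  rw [h1]
  module

lemma lref_isometry (b m : V) (hm : ‖m‖ = 1) : Isometry (lref b m) := by
  intro x y
  rw [edist_dist, edist_dist, dist_eq_norm]
  congr 1
  have hxy : lref b m x - lref b m y = (x - y) - (2 * ⟪x - y, m⟫) • m := by
    unfold lref
    have : ⟪x - b, m⟫ - ⟪y - b, m⟫ = ⟪x - y, m⟫ := by
      rw [← inner_sub_left]; congr 1; abel
    rw [← this]
    module
  rw [hxy, dist_eq_norm]
  have : ‖x - y - (2 * ⟪x - y, m⟫) • m‖ ^ 2 = ‖x - y‖ ^ 2 := by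
    rw [norm_sub_sq_real, real_inner_smul_right, norm_smul, hm]
    rw [Real.norm_eq_abs, mul_one, sq_abs]
    ring
  have h1 := congrArg Real.sqrt this
  rwa [Real.sqrt_sq (norm_nonneg _), Real.sqrt_sq (norm_nonneg _)] at h1

/-- the reflection as an `IsometryEquiv` -/
noncomputable def lrefIso (b m : V) (hm : ‖m‖ = 1) : V ≃ᵢ V :=
  ⟨(lref_involutive b m hm).toPerm, lref_isometry b m hm⟩

@[simp] lemma lrefIso_apply (b m : V) (hm : ‖m‖ = 1) (y : V) :
    lrefIso b m hm y = y - (2 * ⟪y - b, m⟫) • m := rfl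

lemma lref_fix (b m y : V) (h : ⟪y - b, m⟫ = (0:ℝ)) : lref b m y = y := by
  unfold lref; rw [h]; simp

lemma lrefIso_image (b m ν : V) (hm : ‖m‖ = 1) (hmν : ⟪m, ν⟫ = (0:ℝ)) (t : ℝ) :
    lrefIso b m hm '' {x | ⟪x, ν⟫ = t} = {x | ⟪x, ν⟫ = t} := by
  have key : ∀ y : V, ⟪lref b m y, ν⟫ = ⟪y, ν⟫ := by
    intro y
    unfold lref
    rw [inner_sub_left, real_inner_smul_left, hmν]
    ring
  ext y
  constructor
  · rintro ⟨x, hx, rfl⟩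
    show ⟪lref b m x, ν⟫ = t
    rw [key x]; exact hx
  · intro hy
    refine ⟨lref b m y, ?_, lref_involutive b m hm y⟩
    simpa [key y] using hy

end Refl

section Sect
variable {n : ℕ}

lemma sect (hn : 4 ≤ n) (K : Set (EuclideanSpace ℝ (Fin n)))
    (d₁ d₂ : EuclideanSpace ℝ (Fin n)) (hD : UniqueDiameter K d₁ d₂)
    (p : EuclideanSpace ℝ (Fin n))
    (hsec : ∀ (ν : EuclideanSpace ℝ (Fin n)) (t : ℝ), ‖ν‖ = 1 →
      (inner ℝ p ν : ℝ) = t → ({x | (inner ℝ x ν : ℝ) = t} ∩ interior K).Nonempty →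
      ∃ b w, IsRevBodyIn {x | (inner ℝ x ν : ℝ) = t}
        ({x | (inner ℝ x ν : ℝ) = t} ∩ K) b w)
    (ν : EuclideanSpace ℝ (Fin n)) (hν : ‖ν‖ = 1)
    (hνu : ⟪d₂ - d₁, ν⟫ = (0:ℝ)) (hνq : ⟪p - d₁, ν⟫ = (0:ℝ))
    (hnem : ({x | (inner ℝ x ν : ℝ) = inner ℝ p ν} ∩ interior K).Nonempty)
    (m : EuclideanSpace ℝ (Fin n)) (hm : ‖m‖ = 1)
    (hmu : ⟪d₂ - d₁, m⟫ = (0:ℝ)) (hmν : ⟪m, ν⟫ = (0:ℝ)) :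
    ∀ x ∈ K, ⟪x, ν⟫ = (inner ℝ p ν : ℝ) → lref d₁ m x ∈ K := by
  classical
  set tv : ℝ := inner ℝ p ν with htv
  obtain ⟨b, w, hw0, hbP, hline, hinv⟩ := hsec ν tv hν rfl hnem
  have hbν : ⟪b, ν⟫ = tv := hbP
  have hwν : ⟪w, ν⟫ = (0:ℝ) := by
    have h1 : ⟪b + (1:ℝ) • w, ν⟫ = tv := hline 1
    rw [inner_add_left, one_smul, hbν] at h1
    linarith
  have hd₁ν : ⟪d₁, ν⟫ = tv := by
    rw [inner_sub_left] at hνq; rw [htv]; linarith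
  have hd₂ν : ⟪d₂, ν⟫ = tv := by
    rw [inner_sub_left] at hνq hνu; rw [htv]; linarith
  -- any admissible isometry maps d₁,d₂ into {d₁,d₂}
  have orbit : ∀ g : EuclideanSpace ℝ (Fin n) ≃ᵢ EuclideanSpace ℝ (Fin n),
      (∀ s : ℝ, g (b + s • w) = b + s • w) →
      g '' {x | (inner ℝ x ν : ℝ) = tv} = {x | (inner ℝ x ν : ℝ) = tv} →
      ∀ e, (e = d₁ ∨ e = d₂) → (g e = d₁ ∨ g e = d₂) := by
    intro g hg hgP e he
    have hS := hinv g hg hgP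
    have hd₁S : d₁ ∈ {x | (inner ℝ x ν : ℝ) = tv} ∩ K := ⟨hd₁ν, hD.1⟩
    have hd₂S : d₂ ∈ {x | (inner ℝ x ν : ℝ) = tv} ∩ K := ⟨hd₂ν, hD.2.1⟩
    have hg₁ : g d₁ ∈ {x | (inner ℝ x ν : ℝ) = tv} ∩ K := by
      rw [← hS]; exact Set.mem_image_of_mem _ hd₁S
    have hg₂ : g d₂ ∈ {x | (inner ℝ x ν : ℝ) = tv} ∩ K := by
      rw [← hS]; exact Set.mem_image_of_mem _ hd₂S
    have hdist : dist (g d₁) (g d₂) = dist d₁ d₂ := g.dist_eq d₁ d₂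
    have hset := hD.2.2.2.2 (g d₁) hg₁.2 (g d₂) hg₂.2 hdist
    have : g e ∈ ({g d₁, g d₂} : Set _) := by
      rcases he with rfl | rfl
      · exact Set.mem_insert _ _
      · exact Set.mem_insert_iff.mpr (Or.inr rfl)
    rw [hset] at this
    simpa using this
  -- both endpoints of the diameter lie on the axis
  have axis : ∀ e, (e = d₁ ∨ e = d₂) → ∃ s : ℝ, e = b + s • w := by
    intro e he
    by_contra hno
    push_neg at hno
    have heK : e ∈ K := by rcases he with rfl | rfl; exacts [hD.1, hD.2.1]
    have heν : ⟪e, ν⟫ = tv := by rcases he with rfl | rfl; exacts [hd₁ν, hd₂ν]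
    have hwn0 : ‖w‖ ≠ 0 := norm_ne_zero_iff.mpr hw0
    set wh : EuclideanSpace ℝ (Fin n) := ‖w‖⁻¹ • w with hwhdef
    have hwh : ‖wh‖ = 1 := by
      rw [hwhdef, norm_smul, Real.norm_eq_abs, abs_inv, abs_norm, inv_mul_cancel₀ hwn0]
    have hwhwh : ⟪wh, wh⟫ = (1:ℝ) := by rw [real_inner_self_eq_norm_sq, hwh]; norm_num
    set σ : ℝ := ⟪e - b, wh⟫ with hσdef
    set v' : EuclideanSpace ℝ (Fin n) := (e - b) - σ • wh with hv'def
    have heb : e - b = v' + σ • wh := by rw [hv'def]; abel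
    have hv'0 : v' ≠ 0 := by
      intro h
      apply hno (σ * ‖w‖⁻¹)
      have : e - b = (σ * ‖w‖⁻¹) • w := by
        rw [heb, h, zero_add, hwhdef, smul_smul]
      rw [← this]; abel
    have hv'n0 : ‖v'‖ ≠ 0 := norm_ne_zero_iff.mpr hv'0
    have hv'wh : ⟪v', wh⟫ = (0:ℝ) := by
      rw [hv'def, inner_sub_left, real_inner_smul_left, hwhwh, mul_one, hσdef, sub_self]
    have hv'w : ⟪v', w⟫ = (0:ℝ) := by
      have : ⟪v', wh⟫ = ‖w‖⁻¹ * ⟪v', w⟫ := by rw [hwhdef, real_inner_smul_right]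
      rw [this] at hv'wh
      rcases mul_eq_zero.mp hv'wh with h | h
      · exact absurd h (inv_ne_zero hwn0)
      · exact h
    have hebν : ⟪e - b, ν⟫ = (0:ℝ) := by rw [inner_sub_left, heν, hbν, sub_self]
    have hwhν : ⟪wh, ν⟫ = (0:ℝ) := by rw [hwhdef, real_inner_smul_left, hwν, mul_zero]
    have hv'ν : ⟪v', ν⟫ = (0:ℝ) := by
      rw [hv'def, inner_sub_left, hebν, real_inner_smul_left, hwhν, mul_zero, sub_self]
    set m₁ : EuclideanSpace ℝ (Fin n) := ‖v'‖⁻¹ • v' with hm₁def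
    have hm₁ : ‖m₁‖ = 1 := by
      rw [hm₁def, norm_smul, Real.norm_eq_abs, abs_inv, abs_norm, inv_mul_cancel₀ hv'n0]
    obtain ⟨m₂, hm₂, hm₂w, hm₂ν, hm₂v'⟩ := exists_unit_orth hn w ν v'
    have hm₁m₂ : ⟪m₁, m₂⟫ = (0:ℝ) := by
      rw [hm₁def, real_inner_smul_left, hm₂v', mul_zero]
    -- the two tilted normals
    have h2 : (0:ℝ) ≤ 2 := by norm_num
    set c : ℝ := (Real.sqrt 2)⁻¹ with hcdef
    have hsq2 : Real.sqrt 2 ≠ 0 := by positivity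
    have hc2 : 2 * c ^ 2 = 1 := by
      rw [hcdef, ← one_div, div_pow, one_pow, Real.sq_sqrt h2]
      norm_num
    set m₃ : EuclideanSpace ℝ (Fin n) := c • (m₁ + m₂) with hm₃def
    set m₄ : EuclideanSpace ℝ (Fin n) := c • (m₁ - m₂) with hm₄def
    have hm₂m₁ : ⟪m₂, m₁⟫ = (0:ℝ) := by rw [real_inner_comm]; exact hm₁m₂
    have hnorm₃ : ‖m₃‖ = 1 := by
      have : ‖m₁ + m₂‖ ^ 2 = 2 := by
        rw [norm_add_sq_real, hm₁, hm₂, hm₁m₂]; norm_num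
      have h12 : ‖m₁ + m₂‖ = Real.sqrt 2 := by
        rw [← Real.sqrt_sq (norm_nonneg (m₁ + m₂)), this]
      rw [hm₃def, norm_smul, Real.norm_eq_abs, hcdef, abs_inv,
        abs_of_nonneg (Real.sqrt_nonneg 2), h12, inv_mul_cancel₀ hsq2]
    have hnorm₄ : ‖m₄‖ = 1 := by
      have : ‖m₁ - m₂‖ ^ 2 = 2 := by
        rw [norm_sub_sq_real, hm₁, hm₂, hm₁m₂]; norm_num
      have h12 : ‖m₁ - m₂‖ = Real.sqrt 2 := by
        rw [← Real.sqrt_sq (norm_nonneg (m₁ - m₂)), this]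
      rw [hm₄def, norm_smul, Real.norm_eq_abs, hcdef, abs_inv,
        abs_of_nonneg (Real.sqrt_nonneg 2), h12, inv_mul_cancel₀ hsq2]
    have hwm₁ : ⟪w, m₁⟫ = (0:ℝ) := by
      rw [hm₁def, real_inner_smul_right, real_inner_comm, hv'w, mul_zero]
    have hwm₂ : ⟪w, m₂⟫ = (0:ℝ) := hm₂w
    have hm₁ν : ⟪m₁, ν⟫ = (0:ℝ) := by
      rw [hm₁def, real_inner_smul_left, hv'ν, mul_zero]
    have hm₂ν' : ⟪m₂, ν⟫ = (0:ℝ) := by rw [real_inner_comm]; exact hm₂ν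
    have hwm₃ : ⟪w, m₃⟫ = (0:ℝ) := by
      rw [hm₃def, real_inner_smul_right, inner_add_right, hwm₁, hwm₂]; ring
    have hwm₄ : ⟪w, m₄⟫ = (0:ℝ) := by
      rw [hm₄def, real_inner_smul_right, inner_sub_right, hwm₁, hwm₂]; ring
    have hm₃ν : ⟪m₃, ν⟫ = (0:ℝ) := by
      rw [hm₃def, real_inner_smul_left, inner_add_left, hm₁ν, hm₂ν']; ring
    have hm₄ν : ⟪m₄, ν⟫ = (0:ℝ) := by
      rw [hm₄def, real_inner_smul_left, inner_sub_left, hm₁ν, hm₂ν']; ring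
    have hfix : ∀ (mm : EuclideanSpace ℝ (Fin n)) (hmm : ‖mm‖ = 1),
        ⟪w, mm⟫ = (0:ℝ) → ∀ s : ℝ, lrefIso b mm hmm (b + s • w) = b + s • w := by
      intro mm hmm hwm s
      show lref b mm (b + s • w) = b + s • w
      apply lref_fix
      rw [add_sub_cancel_left, real_inner_smul_left, hwm, mul_zero]
    have horb₃ := orbit (lrefIso b m₃ hnorm₃) (hfix m₃ hnorm₃ hwm₃)
      (lrefIso_image b m₃ ν hnorm₃ hm₃ν tv) e he
    have horb₄ := orbit (lrefIso b m₄ hnorm₄) (hfix m₄ hnorm₄ hwm₄)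
      (lrefIso_image b m₄ ν hnorm₄ hm₄ν tv) e he
    -- compute the two images
    have hebm₁ : ⟪e - b, m₁⟫ = ‖v'‖ := by
      have h1 : ⟪v', m₁⟫ = ‖v'‖ := by
        rw [hm₁def, real_inner_smul_right, real_inner_self_eq_norm_sq, sq]
        field_simp
      have h2 : ⟪wh, m₁⟫ = (0:ℝ) := by
        rw [hm₁def, real_inner_smul_right, real_inner_comm, hv'wh, mul_zero]
      rw [heb, inner_add_left, h1, real_inner_smul_left, h2, mul_zero, add_zero]
    have hebm₂ : ⟪e - b, m₂⟫ = (0:ℝ) := by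
      rw [heb, inner_add_left, hm₂v', real_inner_smul_left, hwhdef,
        real_inner_smul_left, hm₂w]
      ring
    have hebm₃ : ⟪e - b, m₃⟫ = c * ‖v'‖ := by
      rw [hm₃def, real_inner_smul_right, inner_add_right, hebm₁, hebm₂, add_zero]
    have hebm₄ : ⟪e - b, m₄⟫ = c * ‖v'‖ := by
      rw [hm₄def, real_inner_smul_right, inner_sub_right, hebm₁, hebm₂, sub_zero]
    have hsm : ‖v'‖ • m₁ = v' := by
      rw [hm₁def, smul_smul, mul_inv_cancel₀ hv'n0, one_smul]
    have hcc : 2 * (c * ‖v'‖) * c = ‖v'‖ := by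
      have h' : 2 * (c * ‖v'‖) * c = (2 * c ^ 2) * ‖v'‖ := by ring
      rw [h', hc2, one_mul]
    have h3 : lrefIso b m₃ hnorm₃ e = e - v' - ‖v'‖ • m₂ := by
      rw [lrefIso_apply, hebm₃, hm₃def, smul_smul, hcc, smul_add, hsm]
      abel
    have h4 : lrefIso b m₄ hnorm₄ e = e - v' + ‖v'‖ • m₂ := by
      rw [lrefIso_apply, hebm₄, hm₄def, smul_smul, hcc, smul_sub, hsm]
      abel
    have hm₂m₂ : ⟪m₂, m₂⟫ = (1:ℝ) := by
      rw [real_inner_self_eq_norm_sq, hm₂]; norm_num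
    have hne3 : lrefIso b m₃ hnorm₃ e ≠ e := by
      intro h
      rw [h3] at h
      have h0 : v' + ‖v'‖ • m₂ = 0 := by
        have h' : e - (v' + ‖v'‖ • m₂) = e := by
          calc e - (v' + ‖v'‖ • m₂) = e - v' - ‖v'‖ • m₂ := by abel
          _ = e := h
        exact sub_eq_self.mp h'
      have := congrArg (fun z => (⟪z, m₂⟫ : ℝ)) h0
      simp only [inner_add_left, real_inner_smul_left, hm₂v', hm₂m₂, mul_one,
        inner_zero_left, zero_add] at this
      exact hv'n0 this
    have hne4 : lrefIso b m₄ hnorm₄ e ≠ e := by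
      intro h
      rw [h4] at h
      have h0 : v' - ‖v'‖ • m₂ = 0 := by
        have h' : e - (v' - ‖v'‖ • m₂) = e := by
          calc e - (v' - ‖v'‖ • m₂) = e - v' + ‖v'‖ • m₂ := by abel
          _ = e := h
        exact sub_eq_self.mp h'
      have := congrArg (fun z => (⟪z, m₂⟫ : ℝ)) h0
      simp only [inner_sub_left, real_inner_smul_left, hm₂v', hm₂m₂, mul_one,
        inner_zero_left, zero_sub, neg_eq_zero] at this
      exact hv'n0 this
    have hne34 : lrefIso b m₃ hnorm₃ e ≠ lrefIso b m₄ hnorm₄ e := by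
      intro h
      rw [h3, h4] at h
      have := congrArg (fun z => (⟪z, m₂⟫ : ℝ)) h
      simp only [inner_sub_left, inner_add_left, real_inner_smul_left, hm₂v', hm₂m₂,
        mul_one] at this
      have : ‖v'‖ = 0 := by linarith
      exact hv'n0 this
    rcases he with he | he <;> rcases horb₃ with h₃ | h₃ <;> rcases horb₄ with h₄ | h₄ <;>
      first
        | exact hne3 (h₃.trans he.symm)
        | exact hne4 (h₄.trans he.symm)
        | exact hne34 (h₃.trans h₄.symm)
  -- the axis is the line of the diameter; conclude invariance
  obtain ⟨s₁, hs₁⟩ := axis d₁ (Or.inl rfl)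
  obtain ⟨s₂, hs₂⟩ := axis d₂ (Or.inr rfl)
  have hs12 : s₂ - s₁ ≠ 0 := by
    intro h
    apply hD.2.2.1
    have hss : s₁ = s₂ := by linarith [sub_eq_zero.mp h]
    rw [hs₁, hs₂, hss]
  have hdw : d₂ - d₁ = (s₂ - s₁) • w := by rw [hs₁, hs₂, sub_smul]; abel
  have hwm : ⟪w, m⟫ = (0:ℝ) := by
    rw [hdw, real_inner_smul_left] at hmu
    rcases mul_eq_zero.mp hmu with h | h
    · exact absurd h hs12
    · exact h
  have hb : b = d₁ - s₁ • w := by rw [hs₁]; abel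
  have hfixR : ∀ s : ℝ, lrefIso d₁ m hm (b + s • w) = b + s • w := by
    intro s
    show lref d₁ m (b + s • w) = b + s • w
    apply lref_fix
    have h' : b + s • w - d₁ = (s - s₁) • w := by rw [hb, sub_smul]; abel
    rw [h', real_inner_smul_left, hwm, mul_zero]
  have himg := hinv (lrefIso d₁ m hm) hfixR (lrefIso_image d₁ m ν hm hmν tv)
  intro x hxK hxν
  have hxS : x ∈ {x | (inner ℝ x ν : ℝ) = tv} ∩ K := ⟨hxν, hxK⟩
  have hmem : lrefIso d₁ m hm x ∈ {x | (inner ℝ x ν : ℝ) = tv} ∩ K := by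
    rw [← himg]
    exact Set.mem_image_of_mem _ hxS
  exact hmem.2


lemma move (hn : 4 ≤ n) (K : Set (EuclideanSpace ℝ (Fin n)))
    (d₁ d₂ : EuclideanSpace ℝ (Fin n)) (hD : UniqueDiameter K d₁ d₂)
    (p : EuclideanSpace ℝ (Fin n))
    (hsec : ∀ (ν : EuclideanSpace ℝ (Fin n)) (t : ℝ), ‖ν‖ = 1 →
      (inner ℝ p ν : ℝ) = t → ({x | (inner ℝ x ν : ℝ) = t} ∩ interior K).Nonempty →
      ∃ b w, IsRevBodyIn {x | (inner ℝ x ν : ℝ) = t}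
        ({x | (inner ℝ x ν : ℝ) = t} ∩ K) b w)
    (ν : EuclideanSpace ℝ (Fin n)) (hν : ‖ν‖ = 1)
    (hνu : ⟪d₂ - d₁, ν⟫ = (0:ℝ)) (hνq : ⟪p - d₁, ν⟫ = (0:ℝ))
    (hnem : ({x | (inner ℝ x ν : ℝ) = inner ℝ p ν} ∩ interior K).Nonempty)
    (s : ℝ) (v v' : EuclideanSpace ℝ (Fin n))
    (hvν : ⟪v, ν⟫ = (0:ℝ)) (hv'ν : ⟪v', ν⟫ = (0:ℝ))
    (hvu : ⟪d₂ - d₁, v⟫ = (0:ℝ)) (hv'u : ⟪d₂ - d₁, v'⟫ = (0:ℝ))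
    (hnorm : ‖v‖ = ‖v'‖)
    (hx : d₁ + s • (d₂ - d₁) + v ∈ K) :
    d₁ + s • (d₂ - d₁) + v' ∈ K := by
  by_cases hvv : v = v'
  · rwa [hvv] at hx
  have hd₁ν : ⟪d₁, ν⟫ = (inner ℝ p ν : ℝ) := by
    rw [inner_sub_left] at hνq; linarith
  set dd : EuclideanSpace ℝ (Fin n) := v - v' with hdddef
  have hdd0 : dd ≠ 0 := sub_ne_zero.mpr hvv
  have hddn : ‖dd‖ ≠ 0 := norm_ne_zero_iff.mpr hdd0
  set m : EuclideanSpace ℝ (Fin n) := ‖dd‖⁻¹ • dd with hmdef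
  have hm : ‖m‖ = 1 := by
    rw [hmdef, norm_smul, Real.norm_eq_abs, abs_inv, abs_norm, inv_mul_cancel₀ hddn]
  have hmu : ⟪d₂ - d₁, m⟫ = (0:ℝ) := by
    rw [hmdef, real_inner_smul_right, hdddef, inner_sub_right, hvu, hv'u]
    ring
  have hmν : ⟪m, ν⟫ = (0:ℝ) := by
    rw [hmdef, real_inner_smul_left, hdddef, inner_sub_left, hvν, hv'ν]
    ring
  have hxν : ⟪d₁ + s • (d₂ - d₁) + v, ν⟫ = (inner ℝ p ν : ℝ) := by
    rw [inner_add_left, inner_add_left, real_inner_smul_left, hνu, hvν, hd₁ν]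
    ring
  have hres := sect hn K d₁ d₂ hD p hsec ν hν hνu hνq hnem m hm hmu hmν
    (d₁ + s • (d₂ - d₁) + v) hx hxν
  -- compute the reflected point
  have hvv' : ⟪v, v⟫ = (⟪v', v'⟫ : ℝ) := by
    rw [real_inner_self_eq_norm_sq, real_inner_self_eq_norm_sq, hnorm]
  have hdd2 : ⟪v, dd⟫ = ‖dd‖ ^ 2 / 2 := by
    have h1 : ‖dd‖ ^ 2 = ⟪v, v⟫ - 2 * ⟪v, v'⟫ + ⟪v', v'⟫ := by
      rw [← real_inner_self_eq_norm_sq, hdddef, inner_sub_left, inner_sub_right,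
        inner_sub_right, real_inner_comm v' v]
      ring
    rw [hdddef, inner_sub_right, h1, ← hvv']
    ring
  have hxdm : ⟪d₁ + s • (d₂ - d₁) + v - d₁, m⟫ = ‖dd‖ / 2 := by
    have h2 : d₁ + s • (d₂ - d₁) + v - d₁ = s • (d₂ - d₁) + v := by abel
    rw [h2, inner_add_left, real_inner_smul_left, hmu, hmdef, real_inner_smul_right,
      hdd2, sq]
    field_simp
    ring
  have hrefl : lref d₁ m (d₁ + s • (d₂ - d₁) + v) = d₁ + s • (d₂ - d₁) + v' := by
    unfold lref
    rw [hxdm, hmdef, smul_smul]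
    have h3 : 2 * (‖dd‖ / 2) * ‖dd‖⁻¹ = 1 := by field_simp
    rw [h3, one_smul, hdddef]
    abel
  rwa [hrefl] at hres

lemma interior_center (hn : 4 ≤ n) (K : Set (EuclideanSpace ℝ (Fin n)))
    (hKc : Convex ℝ K) (hKi : (interior K).Nonempty)
    (d₁ d₂ : EuclideanSpace ℝ (Fin n)) (hD : UniqueDiameter K d₁ d₂)
    (p : EuclideanSpace ℝ (Fin n))
    (hsec : ∀ (ν : EuclideanSpace ℝ (Fin n)) (t : ℝ), ‖ν‖ = 1 →
      (inner ℝ p ν : ℝ) = t → ({x | (inner ℝ x ν : ℝ) = t} ∩ interior K).Nonempty →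
      ∃ b w, IsRevBodyIn {x | (inner ℝ x ν : ℝ) = t}
        ({x | (inner ℝ x ν : ℝ) = t} ∩ K) b w) :
    ∃ s : ℝ, d₁ + s • (d₂ - d₁) ∈ interior K := by
  obtain ⟨z₀, hz₀⟩ := hKi
  set u : EuclideanSpace ℝ (Fin n) := d₂ - d₁ with hudef
  have hu0 : u ≠ 0 := sub_ne_zero.mpr (Ne.symm hD.2.2.1)
  have hun : ‖u‖ ≠ 0 := norm_ne_zero_iff.mpr hu0
  set s : ℝ := ⟪z₀ - d₁, u⟫ / ‖u‖ ^ 2 with hsdef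
  set v₀ : EuclideanSpace ℝ (Fin n) := z₀ - d₁ - s • u with hv₀def
  have hz₀eq : z₀ = d₁ + s • u + v₀ := by rw [hv₀def]; abel
  have huv₀ : ⟪u, v₀⟫ = (0:ℝ) := by
    rw [hv₀def, inner_sub_right, real_inner_smul_right, real_inner_self_eq_norm_sq,
      hsdef, real_inner_comm]
    field_simp
    ring
  by_cases hv₀ : v₀ = 0
  · exact ⟨s, by rw [hv₀, add_zero] at hz₀eq; rwa [← hz₀eq]⟩
  obtain ⟨ν, hν, hνu, hνq, hνv₀⟩ := exists_unit_orth hn u (p - d₁) v₀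
  have hd₁ν : ⟪d₁, ν⟫ = (inner ℝ p ν : ℝ) := by
    rw [inner_sub_left] at hνq; linarith
  have hnem : ({x | (inner ℝ x ν : ℝ) = inner ℝ p ν} ∩ interior K).Nonempty := by
    refine ⟨z₀, ?_, hz₀⟩
    show ⟪z₀, ν⟫ = (inner ℝ p ν : ℝ)
    rw [hz₀eq, inner_add_left, inner_add_left, real_inner_smul_left, hνu, hνv₀, hd₁ν]
    ring
  have hv₀ν : ⟪v₀, ν⟫ = (0:ℝ) := hνv₀
  have hy := move hn K d₁ d₂ hD p hsec ν hν hνu hνq hnem s v₀ (-v₀)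
    hv₀ν (by rw [inner_neg_left, hv₀ν, neg_zero])
    huv₀ (by rw [inner_neg_right, huv₀, neg_zero])
    (norm_neg v₀).symm (by rw [← hz₀eq]; exact interior_subset hz₀)
  refine ⟨s, ?_⟩
  have hcombo := Convex.combo_interior_self_mem_interior hKc hz₀ hy
    (by norm_num : (0:ℝ) < 1/2) (by norm_num : (0:ℝ) ≤ 1/2) (by norm_num)
  have heq : (1/2 : ℝ) • z₀ + (1/2 : ℝ) • (d₁ + s • u + -v₀) = d₁ + s • u := by
    rw [hz₀eq]
    module
  rwa [heq] at hcombo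

/-- if `K ⊂ ℝⁿ`, `n ≥ 4`, is a convex body with unique diameter
`D = [d₁, d₂]` and there is a point `p` off the line of `D` such that every
hyperplane section of `K` through `p` (meeting the interior of `K`) is an
`(n-1)`-dimensional body of revolution, then `K` is a body of revolution whose
axis is the line containing `D`. -/
theorem stmt_9 {n : ℕ} (hn : 4 ≤ n)
    (K : Set (EuclideanSpace ℝ (Fin n))) (hK : IsConvexBody K)
    (d₁ d₂ : EuclideanSpace ℝ (Fin n)) (hD : UniqueDiameter K d₁ d₂)
    (p : EuclideanSpace ℝ (Fin n))
    (hp : ¬ ∃ t : ℝ, p = d₁ + t • (d₂ - d₁))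
    (hsec : ∀ (ν : EuclideanSpace ℝ (Fin n)) (t : ℝ), ‖ν‖ = 1 →
      (inner ℝ p ν : ℝ) = t → ({x | (inner ℝ x ν : ℝ) = t} ∩ interior K).Nonempty →
      ∃ b w, IsRevBodyIn {x | (inner ℝ x ν : ℝ) = t}
        ({x | (inner ℝ x ν : ℝ) = t} ∩ K) b w) :
    IsRevBody K d₁ (d₂ - d₁) := by
  classical
  have hu0 : d₂ - d₁ ≠ 0 := sub_ne_zero.mpr (Ne.symm hD.2.2.1)
  have hun : ‖d₂ - d₁‖ ≠ 0 := norm_ne_zero_iff.mpr hu0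
  obtain ⟨sc, hsc⟩ := interior_center hn K hK.2.1 hK.2.2 d₁ d₂ hD p hsec
  -- every hyperplane through the axis and p meets the interior of K
  have hnem : ∀ ν : EuclideanSpace ℝ (Fin n), ⟪d₂ - d₁, ν⟫ = (0:ℝ) →
      ⟪p - d₁, ν⟫ = (0:ℝ) →
      ({x | (inner ℝ x ν : ℝ) = inner ℝ p ν} ∩ interior K).Nonempty := by
    intro ν h1 h2
    refine ⟨d₁ + sc • (d₂ - d₁), ?_, hsc⟩
    show ⟪d₁ + sc • (d₂ - d₁), ν⟫ = (inner ℝ p ν : ℝ)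
    rw [inner_sub_left] at h2
    rw [inner_add_left, real_inner_smul_left, h1]
    linarith
  -- the key invariance step
  have key : ∀ g : EuclideanSpace ℝ (Fin n) ≃ᵢ EuclideanSpace ℝ (Fin n),
      (∀ t : ℝ, g (d₁ + t • (d₂ - d₁)) = d₁ + t • (d₂ - d₁)) →
      ∀ x ∈ K, g x ∈ K := by
    intro g hg x hx
    set u : EuclideanSpace ℝ (Fin n) := d₂ - d₁ with hudef
    set s : ℝ := ⟪x - d₁, u⟫ / ‖u‖ ^ 2 with hsdef
    set v : EuclideanSpace ℝ (Fin n) := x - d₁ - s • u with hvdef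
    set vh : EuclideanSpace ℝ (Fin n) := g x - d₁ - s • u with hvhdef
    have hxeq : x = d₁ + s • u + v := by rw [hvdef]; abel
    have hgxeq : g x = d₁ + s • u + vh := by rw [hvhdef]; abel
    have huv : ⟪u, v⟫ = (0:ℝ) := by
      rw [hvdef, inner_sub_right, real_inner_smul_right, real_inner_self_eq_norm_sq,
        hsdef, real_inner_comm]
      field_simp
      ring
    -- distances to points of the axis are preserved
    have hgd₁ : g d₁ = d₁ := by
      have := hg 0
      rwa [zero_smul, add_zero] at this
    have hgd₂ : g (d₁ + u) = d₁ + u := by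
      have := hg 1
      rwa [one_smul] at this
    have hn₀ : ‖g x - d₁‖ = ‖x - d₁‖ := by
      have h := g.dist_eq x d₁
      rw [hgd₁, dist_eq_norm, dist_eq_norm] at h
      exact h
    have hn₁ : ‖g x - (d₁ + u)‖ = ‖x - (d₁ + u)‖ := by
      have h := g.dist_eq x (d₁ + u)
      rw [dist_eq_norm, dist_eq_norm, hgd₂] at h
      exact h
    have hinner : ⟪g x - d₁, u⟫ = ⟪x - d₁, u⟫ := by
      have e₁ : ∀ y : EuclideanSpace ℝ (Fin n),
          ‖y - (d₁ + u)‖ ^ 2 = ‖y - d₁‖ ^ 2 - 2 * ⟪y - d₁, u⟫ + ‖u‖ ^ 2 := by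
        intro y
        have hy : y - (d₁ + u) = (y - d₁) - u := by abel
        rw [hy, norm_sub_sq_real]
      have h₁ := e₁ (g x)
      have h₂ := e₁ x
      rw [hn₁, hn₀, h₂] at h₁
      linarith
    have huvh : ⟪u, vh⟫ = (0:ℝ) := by
      rw [hvhdef, inner_sub_right, real_inner_smul_right, real_inner_self_eq_norm_sq]
      rw [real_inner_comm (g x - d₁) u, hinner, hsdef]
      field_simp
      ring
    have hnvh : ‖vh‖ = ‖v‖ := by
      have e₂ : ∀ y : EuclideanSpace ℝ (Fin n),
          ‖y - d₁ - s • u‖ ^ 2 = ‖y - d₁‖ ^ 2 - 2 * (s * ⟪y - d₁, u⟫) + s ^ 2 * ‖u‖ ^ 2 := by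
        intro y
        rw [norm_sub_sq_real, real_inner_smul_right, norm_smul, Real.norm_eq_abs]
        rw [mul_pow, sq_abs]
      have h₁ := e₂ (g x)
      have h₂ := e₂ x
      rw [hn₀, hinner] at h₁
      have hsq : ‖vh‖ ^ 2 = ‖v‖ ^ 2 := by
        rw [hvhdef, hvdef, h₁, h₂]
      have := congrArg Real.sqrt hsq
      rwa [Real.sqrt_sq (norm_nonneg _), Real.sqrt_sq (norm_nonneg _)] at this
    obtain ⟨ν₁, hν₁, hν₁u, hν₁q, hν₁v⟩ := exists_unit_orth hn u (p - d₁) v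
    obtain ⟨ν₃, hν₃, hν₃u, hν₃q, hν₃vh⟩ := exists_unit_orth hn u (p - d₁) vh
    obtain ⟨m₀, hm₀, hm₀u, hm₀ν₁, hm₀ν₃⟩ := exists_unit_orth hn u ν₁ ν₃
    set m : EuclideanSpace ℝ (Fin n) := ‖v‖ • m₀ with hmdef
    have hum : ⟪u, m⟫ = (0:ℝ) := by
      rw [hmdef, real_inner_smul_right, hm₀u, mul_zero]
    have hmν₁ : ⟪m, ν₁⟫ = (0:ℝ) := by
      rw [hmdef, real_inner_smul_left, real_inner_comm, hm₀ν₁, mul_zero]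
    have hmν₃ : ⟪m, ν₃⟫ = (0:ℝ) := by
      rw [hmdef, real_inner_smul_left, real_inner_comm, hm₀ν₃, mul_zero]
    have hnm : ‖m‖ = ‖v‖ := by
      rw [hmdef, norm_smul, Real.norm_eq_abs, abs_norm, hm₀, mul_one]
    have hvν₁ : ⟪v, ν₁⟫ = (0:ℝ) := hν₁v
    have hvhν₃ : ⟪vh, ν₃⟫ = (0:ℝ) := hν₃vh
    have step1 : d₁ + s • u + m ∈ K :=
      move hn K d₁ d₂ hD p hsec ν₁ hν₁ hν₁u hν₁q (hnem ν₁ hν₁u hν₁q) s v m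
        hvν₁ hmν₁ huv hum hnm.symm (by rw [← hxeq]; exact hx)
    have step2 : d₁ + s • u + vh ∈ K :=
      move hn K d₁ d₂ hD p hsec ν₃ hν₃ hν₃u hν₃q (hnem ν₃ hν₃u hν₃q) s m vh
        hmν₃ hvhν₃ hum huvh (by rw [hnm, hnvh]) step1
    rwa [← hgxeq] at step2
  intro f hf
  have hfsymm : ∀ t : ℝ, f.symm (d₁ + t • (d₂ - d₁)) = d₁ + t • (d₂ - d₁) := by
    intro t
    conv_lhs => rw [← hf t]
    exact f.symm_apply_apply _
  apply Set.Subset.antisymm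
  · rintro _ ⟨x, hx, rfl⟩
    exact key f hf x hx
  · intro y hy
    exact ⟨f.symm y, key f.symm hfsymm y hy, f.apply_symm_apply y⟩

end Sect
end

section
/- Let K ⊂ ℝ³ be a strictly convex body and let L be a line. Suppose that for every unit vector u orthogonal to L, the orthogonal projection of K onto u^⊥ has a line of symmetry parallel to L. Then K has an axis of symmetry parallel to L; moreover this axis is the unique diametral chord of K joining the two points of contact of the two supporting planes of K perpendicular to L. -/
open Metric Set Filter

section Aux

open Module Submodule

variable {d : ℕ}

lemma inner_lineRefl (b u x : EuclideanSpace ℝ (Fin d)) (hu : ‖u‖ = 1) :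
    (inner ℝ (lineRefl b u x) u : ℝ) = inner ℝ x u := by
  have h : (inner ℝ u u : ℝ) = 1 := by
    rw [real_inner_self_eq_norm_mul_norm, hu]; ring
  simp only [lineRefl, inner_sub_left, inner_add_left, real_inner_smul_left, h]
  ring

lemma lineRefl_invol (b u x : EuclideanSpace ℝ (Fin d)) (hu : ‖u‖ = 1) :
    lineRefl b u (lineRefl b u x) = x := by
  have h : (inner ℝ u u : ℝ) = 1 := by
    rw [real_inner_self_eq_norm_mul_norm, hu]; ring
  simp only [lineRefl, inner_sub_left, inner_add_left, real_inner_smul_left, h]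
  match_scalars <;> ring

lemma lineRefl_eq_of_fixed (b u p : EuclideanSpace ℝ (Fin d))
    (hfix : lineRefl b u p = p) (x : EuclideanSpace ℝ (Fin d)) :
    lineRefl p u x = lineRefl b u x := by
  simp only [lineRefl, inner_sub_left] at hfix ⊢
  linear_combination (norm := module) -hfix

lemma fixed_of_lineRefl (p u q : EuclideanSpace ℝ (Fin d))
    (hfix : lineRefl p u q = q) : p - q = ((inner ℝ (p - q) u : ℝ)) • u := by
  simp only [lineRefl, inner_sub_left] at hfix ⊢
  linear_combination (norm := module) ((1:ℝ)/2) • hfix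

lemma inner_projHyp_orth (v u x : EuclideanSpace ℝ (Fin d)) (hvu : (inner ℝ v u : ℝ) = 0) :
    (inner ℝ (projHyp v x) u : ℝ) = inner ℝ x u := by
  have hxv : (inner ℝ x v : ℝ) • (inner ℝ v u : ℝ) = 0 := by rw [hvu, smul_zero]
  simp only [projHyp, inner_sub_left, real_inner_smul_left, hvu]
  ring

lemma projHyp_lineRefl (v u e x : EuclideanSpace ℝ (Fin d)) (hvu : (inner ℝ v u : ℝ) = 0) :
    projHyp v (lineRefl e u x) = lineRefl (projHyp v e) u (projHyp v x) := by
  have huv : (inner ℝ u v : ℝ) = 0 := by rw [real_inner_comm]; exact hvu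
  simp only [projHyp, lineRefl, inner_sub_left, inner_add_left, real_inner_smul_left, huv, hvu]
  match_scalars <;> ring

lemma unique_max {K : Set (EuclideanSpace ℝ (Fin d))} (hsc : StrictConvex ℝ K)
    (u : EuclideanSpace ℝ (Fin d)) (hu : ‖u‖ = 1)
    {e₁ e₂ : EuclideanSpace ℝ (Fin d)} (h1 : e₁ ∈ K) (h2 : e₂ ∈ K)
    (hm1 : ∀ x ∈ K, (inner ℝ x u : ℝ) ≤ inner ℝ e₁ u)
    (hm2 : ∀ x ∈ K, (inner ℝ x u : ℝ) ≤ inner ℝ e₂ u) : e₁ = e₂ := by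
  by_contra hne
  have huu : (inner ℝ u u : ℝ) = 1 := by
    rw [real_inner_self_eq_norm_mul_norm, hu]; ring
  have hM : (inner ℝ e₁ u : ℝ) = inner ℝ e₂ u := le_antisymm (hm2 e₁ h1) (hm1 e₂ h2)
  have hmid : (1/2 : ℝ) • e₁ + (1/2 : ℝ) • e₂ ∈ interior K :=
    hsc h1 h2 hne (by norm_num) (by norm_num) (by norm_num)
  set m := (1/2 : ℝ) • e₁ + (1/2 : ℝ) • e₂ with hm
  obtain ⟨ε, hε, hball⟩ := Metric.mem_nhds_iff.mp (mem_interior_iff_mem_nhds.mp hmid)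
  have hy : m + (ε/2) • u ∈ K := by
    apply hball
    simp only [mem_ball, dist_self_add_left]
    rw [norm_smul, hu, mul_one, Real.norm_eq_abs, abs_of_pos (by linarith : (0:ℝ) < ε/2)]
    linarith
  have := hm1 _ hy
  rw [inner_add_left, real_inner_smul_left, huu, hm, inner_add_left,
    real_inner_smul_left, real_inner_smul_left, hM] at this
  linarith

lemma unique_min {K : Set (EuclideanSpace ℝ (Fin d))} (hsc : StrictConvex ℝ K)
    (u : EuclideanSpace ℝ (Fin d)) (hu : ‖u‖ = 1)
    {f₁ f₂ : EuclideanSpace ℝ (Fin d)} (h1 : f₁ ∈ K) (h2 : f₂ ∈ K)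
    (hm1 : ∀ x ∈ K, (inner ℝ f₁ u : ℝ) ≤ inner ℝ x u)
    (hm2 : ∀ x ∈ K, (inner ℝ f₂ u : ℝ) ≤ inner ℝ x u) : f₁ = f₂ := by
  refine unique_max hsc (-u) (by rw [norm_neg]; exact hu) h1 h2 ?_ ?_ <;>
    · intro x hx
      rw [inner_neg_right, inner_neg_right]
      first
      | exact neg_le_neg (hm1 x hx)
      | exact neg_le_neg (hm2 x hx)

lemma exists_unit_orth_s10 (u w : EuclideanSpace ℝ (Fin 3)) :
    ∃ v : EuclideanSpace ℝ (Fin 3), ‖v‖ = 1 ∧ (inner ℝ v u : ℝ) = 0 ∧ (inner ℝ v w : ℝ) = 0 := by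
  classical
  set W : Submodule ℝ (EuclideanSpace ℝ (Fin 3)) :=
    span ℝ ((({u, w} : Finset (EuclideanSpace ℝ (Fin 3))) : Set (EuclideanSpace ℝ (Fin 3)))) with hW
  have hle : finrank ℝ W ≤ 2 := by
    have h1 := finrank_span_le_card (R := ℝ)
      ((({u, w} : Finset (EuclideanSpace ℝ (Fin 3))) : Set (EuclideanSpace ℝ (Fin 3))))
    refine h1.trans ?_
    rw [Finset.toFinset_coe]
    exact (Finset.card_insert_le _ _).trans (by simp)
  have horth : Wᗮ ≠ ⊥ := by
    intro hbot
    have h3 : finrank ℝ W + finrank ℝ Wᗮ = finrank ℝ (EuclideanSpace ℝ (Fin 3)) :=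
      W.finrank_add_finrank_orthogonal
    rw [hbot] at h3
    simp [finrank_euclideanSpace] at h3
    omega
  obtain ⟨v0, hv0W, hv0⟩ := Submodule.exists_mem_ne_zero_of_ne_bot horth
  refine ⟨‖v0‖⁻¹ • v0, ?_, ?_, ?_⟩
  · simp [norm_smul, norm_ne_zero_iff.mpr hv0, inv_mul_cancel₀]
  · rw [real_inner_smul_left]
    have h4 : (inner ℝ u v0 : ℝ) = 0 := (Submodule.mem_orthogonal W v0).mp hv0W u
      (subset_span (by simp))
    rw [real_inner_comm] at h4
    rw [h4]; ring
  · rw [real_inner_smul_left]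
    have h4 : (inner ℝ w v0 : ℝ) = 0 := (Submodule.mem_orthogonal W v0).mp hv0W w
      (subset_span (by simp))
    rw [real_inner_comm] at h4
    rw [h4]; ring

end Aux

/-- if every orthogonal projection of a strictly convex body
`K ⊂ ℝ³` onto a plane `v^⊥` with `v ⊥ u` has a line of symmetry parallel to the
line `L` (direction `u`), then `K` has an axis of symmetry parallel to `L`,
namely the diametral chord `EF` joining the contact points of the two supporting
planes of `K` perpendicular to `L`. -/
theorem stmt_10 (K : Set (EuclideanSpace ℝ (Fin 3)))
    (hK : IsConvexBody K) (hsc : StrictConvex ℝ K)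
    (a u : EuclideanSpace ℝ (Fin 3)) (hu : ‖u‖ = 1)
    (hproj : ∀ v : EuclideanSpace ℝ (Fin 3), ‖v‖ = 1 → (inner ℝ v u : ℝ) = 0 →
      ∃ b : EuclideanSpace ℝ (Fin 3), (inner ℝ b v : ℝ) = 0 ∧
        lineRefl b u '' (projHyp v '' K) = projHyp v '' K) :
    ∃ e f : EuclideanSpace ℝ (Fin 3), e ∈ K ∧ f ∈ K ∧
      (∀ x ∈ K, (inner ℝ x u : ℝ) ≤ (inner ℝ e u : ℝ)) ∧
      (∀ x ∈ K, (inner ℝ f u : ℝ) ≤ (inner ℝ x u : ℝ)) ∧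
      (∃ s : ℝ, e - f = s • u) ∧ IsAxisOfSym K e u := by
  classical
  obtain ⟨hKc, hKconv, hKint⟩ := hK
  obtain ⟨z0, hz0⟩ := hKint
  have hKne : K.Nonempty := ⟨z0, interior_subset hz0⟩
  have hcont : Continuous fun x : EuclideanSpace ℝ (Fin 3) => (inner ℝ x u : ℝ) :=
    continuous_id.inner continuous_const
  obtain ⟨e, heK, hemax'⟩ := hKc.exists_isMaxOn hKne hcont.continuousOn
  obtain ⟨f, hfK, hfmin'⟩ := hKc.exists_isMinOn hKne hcont.continuousOn
  have hemax : ∀ x ∈ K, (inner ℝ x u : ℝ) ≤ inner ℝ e u := fun x hx => hemax' hx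
  have hfmin : ∀ x ∈ K, (inner ℝ f u : ℝ) ≤ inner ℝ x u := fun x hx => hfmin' hx
  -- Key fact: for every admissible v, the line through `projHyp v e` with direction u
  -- is a symmetry axis of the projection, and it also fixes `projHyp v f`.
  have key : ∀ v : EuclideanSpace ℝ (Fin 3), ‖v‖ = 1 → (inner ℝ v u : ℝ) = 0 →
      (lineRefl (projHyp v e) u '' (projHyp v '' K) = projHyp v '' K) ∧
      lineRefl (projHyp v e) u (projHyp v f) = projHyp v f := by
    intro v hv1 hv2
    obtain ⟨b, -, hb⟩ := hproj v hv1 hv2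
    have hfe : lineRefl b u (projHyp v e) = projHyp v e := by
      have hmem : lineRefl b u (projHyp v e) ∈ projHyp v '' K := by
        rw [← hb]; exact mem_image_of_mem _ (mem_image_of_mem _ heK)
      obtain ⟨z, hzK, hz⟩ := hmem
      have h1 : (inner ℝ z u : ℝ) = inner ℝ e u := by
        have h2 : (inner ℝ (projHyp v z) u : ℝ) = inner ℝ (projHyp v e) u := by
          rw [hz, inner_lineRefl _ _ _ hu]
        rwa [inner_projHyp_orth v u z hv2, inner_projHyp_orth v u e hv2] at h2
      have hz_e : z = e :=
        unique_max hsc u hu hzK heK (fun x hx => (hemax x hx).trans h1.ge) hemax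
      rw [← hz, hz_e]
    have hff : lineRefl b u (projHyp v f) = projHyp v f := by
      have hmem : lineRefl b u (projHyp v f) ∈ projHyp v '' K := by
        rw [← hb]; exact mem_image_of_mem _ (mem_image_of_mem _ hfK)
      obtain ⟨z, hzK, hz⟩ := hmem
      have h1 : (inner ℝ z u : ℝ) = inner ℝ f u := by
        have h2 : (inner ℝ (projHyp v z) u : ℝ) = inner ℝ (projHyp v f) u := by
          rw [hz, inner_lineRefl _ _ _ hu]
        rwa [inner_projHyp_orth v u z hv2, inner_projHyp_orth v u f hv2] at h2
      have hz_f : z = f :=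
        unique_min hsc u hu hzK hfK (fun x hx => h1.le.trans (hfmin x hx)) hfmin
      rw [← hz, hz_f]
    have heq := lineRefl_eq_of_fixed b u (projHyp v e) hfe
    constructor
    · rw [funext heq]; exact hb
    · rw [heq _]; exact hff
  -- e - f is parallel to u
  have hs : ∃ s : ℝ, e - f = s • u := by
    obtain ⟨v, hv1, hv2, hv3⟩ := exists_unit_orth_s10 u (e - f)
    obtain ⟨-, hfixf⟩ := key v hv1 hv2
    have hpar := fixed_of_lineRefl (projHyp v e) u (projHyp v f) hfixf
    have hef : (inner ℝ e v : ℝ) = inner ℝ f v := by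
      rw [real_inner_comm] at hv3
      rw [inner_sub_left] at hv3; linarith
    have hdiff : projHyp v e - projHyp v f = e - f := by
      simp only [projHyp, hef]; module
    rw [hdiff] at hpar
    exact ⟨_, hpar⟩
  -- the axis of symmetry
  have hsub : lineRefl e u '' K ⊆ K := by
    rintro _ ⟨x, hxK, rfl⟩
    by_contra hRx
    obtain ⟨g, c, hgx, hgK⟩ := geometric_hahn_banach_point_closed hKconv hKc.isClosed hRx
    set w := (InnerProductSpace.toDual ℝ (EuclideanSpace ℝ (Fin 3))).symm g with hw
    have hgw : ∀ y, g y = (inner ℝ w y : ℝ) := fun y => by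
      rw [hw, ← InnerProductSpace.toDual_apply_apply, LinearIsometryEquiv.apply_symm_apply]
    obtain ⟨v, hv1, hv2, hv3⟩ := exists_unit_orth_s10 u w
    obtain ⟨himg, -⟩ := key v hv1 hv2
    have hmem : projHyp v (lineRefl e u x) ∈ projHyp v '' K := by
      rw [projHyp_lineRefl v u e x hv2, ← himg]
      exact mem_image_of_mem _ (mem_image_of_mem _ hxK)
    obtain ⟨y, hyK, hy⟩ := hmem
    have hdiff2 : lineRefl e u x - y
        = ((inner ℝ (lineRefl e u x) v : ℝ) - inner ℝ y v) • v := by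
      simp only [projHyp] at hy
      linear_combination (norm := module) -hy
    have hxy : (inner ℝ w (lineRefl e u x) : ℝ) = inner ℝ w y := by
      rw [show lineRefl e u x
          = y + ((inner ℝ (lineRefl e u x) v : ℝ) - inner ℝ y v) • v from by
        rw [← hdiff2]; module]
      rw [inner_add_right, real_inner_smul_right]
      rw [real_inner_comm] at hv3
      rw [hv3]; ring
    have h1 : g (lineRefl e u x) = g y := by rw [hgw, hgw, hxy]
    have h2 := hgK y hyK
    linarith
  have himg_ax : IsAxisOfSym K e u := by
    apply Subset.antisymm hsub
    intro x hx
    exact ⟨lineRefl e u x, hsub (mem_image_of_mem _ hx), lineRefl_invol e u x hu⟩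
  exact ⟨e, f, heK, hfK, hemax, hfmin, hs, himg_ax⟩
end

section
/- Let K ⊂ ℝ³ be a centrally symmetric strictly convex body with centre o, and suppose K has an axis of symmetry Λ. Let p ∈ Λ ∩ int K with p ≠ o, and let H be the plane through p orthogonal to Λ. Then every chord of K having p as its midpoint lies in H; that is, the set t(p) of endpoints of chords of K with midpoint p equals H ∩ ∂K. -/
open Metric Set Filter

lemma aux_frontier_mem {d : ℕ} {g : EuclideanSpace ℝ (Fin d) → EuclideanSpace ℝ (Fin d)}
    (hgc : Continuous g) (hgg : ∀ x, g (g x) = x) {K : Set (EuclideanSpace ℝ (Fin d))}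
    (hgK : g '' K = K) {x} (hx : x ∈ frontier K) : g x ∈ frontier K := by
  let h : EuclideanSpace ℝ (Fin d) ≃ₜ EuclideanSpace ℝ (Fin d) :=
    ⟨⟨g, g, hgg, hgg⟩, hgc, hgc⟩
  have : h '' frontier K = frontier (h '' K) := h.image_frontier K
  rw [show h '' K = K from hgK] at this
  rw [← this]
  exact ⟨x, hx, rfl⟩

lemma aux_translation {d : ℕ} {K : Set (EuclideanSpace ℝ (Fin d))} (hKc : IsCompact K)
    (hne : K.Nonempty) {u : EuclideanSpace ℝ (Fin d)} (h : ∀ x ∈ K, x + u ∈ K) :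
    u = 0 := by
  obtain ⟨x, hxK, hmax⟩ := hKc.exists_isMaxOn hne
    ((continuous_id.inner continuous_const).continuousOn :
      ContinuousOn (fun y : EuclideanSpace ℝ (Fin d) => (inner ℝ y u : ℝ)) K)
  have h1 : (inner ℝ (x + u) u : ℝ) ≤ inner ℝ x u := hmax (h x hxK)
  rw [inner_add_left] at h1
  have : (inner ℝ u u : ℝ) ≤ 0 := by linarith
  exact real_inner_self_nonpos.mp this

lemma aux_three_sorted {d : ℕ} {K : Set (EuclideanSpace ℝ (Fin d))} (hcl : IsClosed K)
    (hsc : StrictConvex ℝ K) {a w : EuclideanSpace ℝ (Fin d)} (hw : w ≠ 0)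
    {r₁ r₂ r₃ : ℝ} (h12 : r₁ < r₂) (h23 : r₂ < r₃)
    (h1 : a + r₁ • w ∈ frontier K) (h2 : a + r₂ • w ∈ frontier K)
    (h3 : a + r₃ • w ∈ frontier K) : False := by
  have hKfr : frontier K ⊆ K := hcl.frontier_subset
  have hne : a + r₁ • w ≠ a + r₃ • w := by
    intro h
    have h' : (r₁ - r₃) • w = 0 := by
      rw [sub_smul]
      have := congrArg (fun z => z - a - r₃ • w) h
      simp only [add_sub_cancel_left, sub_self] at this
      exact this
    rcases smul_eq_zero.mp h' with h'' | h''
    · have : r₁ = r₃ := by linarith [sub_eq_zero.mp h'']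
      linarith
    · exact hw h''
  set θ : ℝ := (r₂ - r₁) / (r₃ - r₁) with hθ
  have h13 : (0:ℝ) < r₃ - r₁ := by linarith
  have hθ0 : 0 < θ := div_pos (by linarith) h13
  have hθ1 : θ < 1 := (div_lt_one h13).mpr (by linarith)
  have hmid : a + r₂ • w = (1 - θ) • (a + r₁ • w) + θ • (a + r₃ • w) := by
    have hθr : (1 - θ) * r₁ + θ * r₃ = r₂ := by
      have hθm : θ * (r₃ - r₁) = r₂ - r₁ := by rw [hθ]; exact div_mul_cancel₀ _ h13.ne'
      linear_combination hθm
    match_scalars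
    · ring
    · field_simp [hθ] at hθr ⊢
      linarith [hθr]
  have : a + r₂ • w ∈ interior K :=
    hmid ▸ hsc (hKfr h1) (hKfr h3) hne (by linarith) hθ0 (by ring)
  exact (disjoint_interior_frontier.ne_of_mem this h2) rfl

lemma aux_three {d : ℕ} {K : Set (EuclideanSpace ℝ (Fin d))} (hcl : IsClosed K)
    (hsc : StrictConvex ℝ K) {a w : EuclideanSpace ℝ (Fin d)} (hw : w ≠ 0)
    {r₁ r₂ r₃ : ℝ} (h12 : r₁ ≠ r₂) (h13 : r₁ ≠ r₃) (h23 : r₂ ≠ r₃)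
    (h1 : a + r₁ • w ∈ frontier K) (h2 : a + r₂ • w ∈ frontier K)
    (h3 : a + r₃ • w ∈ frontier K) : False := by
  rcases h12.lt_or_gt with hlt | hlt <;> rcases h13.lt_or_gt with hlt' | hlt' <;>
    rcases h23.lt_or_gt with hlt'' | hlt''
  · exact aux_three_sorted hcl hsc hw hlt hlt'' h1 h2 h3
  · exact aux_three_sorted hcl hsc hw hlt' hlt'' h1 h3 h2
  · linarith
  · exact aux_three_sorted hcl hsc hw hlt' hlt h3 h1 h2
  · exact aux_three_sorted hcl hsc hw hlt hlt' h2 h1 h3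
  · linarith
  · exact aux_three_sorted hcl hsc hw hlt'' hlt' h2 h3 h1
  · exact aux_three_sorted hcl hsc hw hlt'' hlt h3 h2 h1

/-- let `K ⊂ ℝ³` be a centrally symmetric strictly convex body
with centre `o`, with an axis of symmetry `Λ` (through `p` with unit direction
`w`), and let `p ∈ Λ ∩ int K`, `p ≠ o`. Then the set `t(p)` of endpoints of
chords of `K` with midpoint `p` is exactly `H ∩ ∂K`, where `H` is the plane
through `p` orthogonal to `Λ`. -/
theorem stmt_13 (K : Set (EuclideanSpace ℝ (Fin 3)))
    (hK : IsConvexBody K) (hsc : StrictConvex ℝ K)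
    (o : EuclideanSpace ℝ (Fin 3)) (hcs : CentSym K o)
    (p w : EuclideanSpace ℝ (Fin 3)) (hw : ‖w‖ = 1)
    (hax : IsAxisOfSym K p w)
    (hpint : p ∈ interior K) (hpo : p ≠ o) :
    {x | x ∈ frontier K ∧ (2:ℝ) • p - x ∈ frontier K} =
      {x | x ∈ frontier K ∧ (inner ℝ (x - p) w : ℝ) = 0} := by
  obtain ⟨hKc, hKconv, hKint⟩ := hK
  have hcl : IsClosed K := hKc.isClosed
  have hne : K.Nonempty := hKint.mono interior_subset
  have hw1 : (inner ℝ w w : ℝ) = 1 := by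
    rw [real_inner_self_eq_norm_sq, hw]; norm_num
  have hw0 : w ≠ 0 := by
    intro h; rw [h, norm_zero] at hw; norm_num at hw
  set R : EuclideanSpace ℝ (Fin 3) → EuclideanSpace ℝ (Fin 3) := lineRefl p w with hRset
  have hRdef : ∀ x, R x = (2:ℝ) • p - x + ((2:ℝ) * (inner ℝ (x - p) w : ℝ)) • w :=
    fun x => rfl
  have hRinner : ∀ x, (inner ℝ (R x - p) w : ℝ) = (inner ℝ (x - p) w : ℝ) := by
    intro x
    rw [hRdef]
    simp only [inner_sub_left, inner_add_left, real_inner_smul_left, hw1]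
    ring
  have hRR : ∀ x, R (R x) = x := by
    intro x
    rw [hRdef (R x), hRinner x, hRdef x]
    module
  have hRcont : Continuous R := by
    rw [hRset]; unfold lineRefl
    exact (continuous_const.sub continuous_id).add
      ((continuous_const.mul ((continuous_id.sub continuous_const).inner (𝕜 := ℝ)
        continuous_const)).smul continuous_const)
  have hRK : R '' K = K := hax
  set σ : EuclideanSpace ℝ (Fin 3) → EuclideanSpace ℝ (Fin 3) :=
    fun x => (2:ℝ) • o - x with hσset
  have hσσ : ∀ x, σ (σ x) = x := by intro x; show (2:ℝ)•o - ((2:ℝ)•o - x) = x; module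
  have hσcont : Continuous σ := continuous_const.sub continuous_id
  have hσK : σ '' K = K := by
    ext y
    constructor
    · rintro ⟨x, hx, rfl⟩; exact (hcs x).mp hx
    · intro hy; exact ⟨σ y, (hcs y).mp hy, hσσ y⟩
  have hRfr : ∀ {x}, x ∈ frontier K → R x ∈ frontier K :=
    fun hx => aux_frontier_mem hRcont hRR hRK hx
  have hσfr : ∀ {x}, x ∈ frontier K → σ x ∈ frontier K :=
    fun hx => aux_frontier_mem hσcont hσσ hσK hx
  set f : EuclideanSpace ℝ (Fin 3) → EuclideanSpace ℝ (Fin 3) := fun x => σ (R x)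
    with hfset
  have hfdef : ∀ x, f x =
      (2:ℝ) • o - ((2:ℝ) • p - x + ((2:ℝ) * (inner ℝ (x - p) w : ℝ)) • w) :=
    fun x => rfl
  have hffr : ∀ {x}, x ∈ frontier K → f x ∈ frontier K := fun hx => hσfr (hRfr hx)
  have hfK : ∀ x ∈ K, f x ∈ K := by
    intro x hx
    have h1 : R x ∈ K := hRK ▸ ⟨x, hx, rfl⟩
    exact hσK ▸ ⟨R x, h1, rfl⟩
  set c : ℝ := (inner ℝ (o - p) w : ℝ) with hc
  have hfinner : ∀ x, (inner ℝ (f x - p) w : ℝ) = 2 * c - (inner ℝ (x - p) w : ℝ) := by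
    intro x
    rw [hfdef, hc]
    simp only [inner_sub_left, inner_add_left, real_inner_smul_left, hw1]
    ring
  have hff : ∀ x, f (f x) = x + ((4:ℝ) • (o - p) - ((4:ℝ) * c) • w) := by
    intro x
    rw [hfdef (f x), hfinner x, hfdef x]
    module
  have hu0 : (4:ℝ) • (o - p) - ((4:ℝ) * c) • w = 0 :=
    aux_translation hKc hne (fun x hx => hff x ▸ hfK _ (hfK _ hx))
  have h4 : (4:ℝ) • ((o - p) - c • w) = 0 := by
    rw [smul_sub, smul_smul]; exact hu0
  have hop : o - p = c • w :=
    sub_eq_zero.mp ((smul_eq_zero.mp h4).resolve_left (by norm_num))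
  have hoe : o = p + c • w := by rw [← hop]; abel
  have hc0 : c ≠ 0 := by
    intro h
    rw [h, zero_smul] at hop
    exact hpo (sub_eq_zero.mp hop).symm
  ext x
  simp only [mem_setOf_eq]
  constructor
  · rintro ⟨hx1, hx2⟩
    refine ⟨hx1, ?_⟩
    set t : ℝ := (inner ℝ (x - p) w : ℝ) with ht
    by_contra ht0
    -- boundary points on the line through x in direction w
    have e0 : x + (0:ℝ) • w ∈ frontier K := by simpa using hx1
    have e1 : x + (-(2*t)) • w ∈ frontier K := by
      have hy := hRfr hx2
      have hRy : R ((2:ℝ) • p - x) = x + (-(2*t)) • w := by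
        rw [hRdef]
        have hin : (inner ℝ ((2:ℝ) • p - x - p) w : ℝ) = -t := by
          rw [ht]
          simp only [inner_sub_left, real_inner_smul_left]
          ring
        rw [hin]
        module
      rwa [hRy] at hy
    have e2 : x + (2*c - 2*t) • w ∈ frontier K := by
      have hfx := hffr hx1
      have : f x = x + (2*c - 2*t) • w := by
        rw [hfdef, ← ht, hoe]
        module
      rwa [this] at hfx
    have htc : t = c := by
      by_contra htc
      exact aux_three hcl hsc hw0
        (show (0:ℝ) ≠ -(2*t) by intro h; exact ht0 (by linarith))
        (show (0:ℝ) ≠ 2*c - 2*t by intro h; exact htc (by linarith))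
        (show -(2*t) ≠ 2*c - 2*t by intro h; exact hc0 (by linarith))
        e0 e1 e2
    -- second line, through 2p - x
    have e0' : ((2:ℝ) • p - x) + (0:ℝ) • w ∈ frontier K := by simpa using hx2
    have e1' : ((2:ℝ) • p - x) + (2*t) • w ∈ frontier K := by
      have hxx := hRfr hx1
      have : R x = ((2:ℝ) • p - x) + (2*t) • w := by
        rw [hRdef, ← ht]
      rwa [this] at hxx
    have e2' : ((2:ℝ) • p - x) + (2*c + 2*t) • w ∈ frontier K := by
      have hfy := hffr hx2
      have hin : (inner ℝ ((2:ℝ) • p - x - p) w : ℝ) = -t := by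
        rw [ht]
        simp only [inner_sub_left, real_inner_smul_left]
        ring
      have : f ((2:ℝ) • p - x) = ((2:ℝ) • p - x) + (2*c + 2*t) • w := by
        rw [hfdef, hin, hoe]
        module
      rwa [this] at hfy
    have htc' : t = -c := by
      by_contra htc'
      exact aux_three hcl hsc hw0
        (show (0:ℝ) ≠ 2*t by intro h; exact ht0 (by linarith))
        (show (0:ℝ) ≠ 2*c + 2*t by intro h; exact htc' (by linarith))
        (show 2*t ≠ 2*c + 2*t by intro h; exact hc0 (by linarith))
        e0' e1' e2'
    rw [htc] at htc'
    exact hc0 (by linarith)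
  · rintro ⟨hx1, hx2⟩
    refine ⟨hx1, ?_⟩
    have hRx : R x = (2:ℝ) • p - x := by
      rw [hRdef, hx2]
      simp
    have := hRfr hx1
    rwa [hRx] at this
end
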